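/- arXiv:1809.00760 — 3 statements merged into one kernel-verified Lean document; each statement's English description precedes it below -/
import Mathlib

section
/- For every n ∈ ℕ the number of self-avoiding walks on ℤ² of length n that begin at the origin satisfies |SAW_n| ≤ Σ_{k=0}^{n} |HSW_{k+1}| · |HSW_{n−k}|, where HSW_m denotes the set of half-space self-avoiding walks of length m. -/
/-- A self-avoiding walk of length `n` on `ℤ²`, starting at the origin, with
nearest-neighbour steps, padded to be constant after time `n`. -/
def IsSAW (n : ℕ) (γ : ℕ → ℤ × ℤ) : Prop :=
  γ 0 = (0, 0) ∧
  (∀ i < n, |(γ (i + 1)).1 - (γ i).1| + |(γ (i + 1)).2 - (γ i).2| = 1) ∧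
  (∀ i ≤ n, ∀ j ≤ n, γ i = γ j → i = j) ∧
  (∀ i, n ≤ i → γ i = γ n)

/-- The number of self-avoiding walks of length `n` on `ℤ²` starting at the origin. -/
noncomputable def cSAW (n : ℕ) : ℕ := Nat.card {γ : ℕ → ℤ × ℤ // IsSAW n γ}

/-- The connective constant `μ` of `ℤ²`, i.e. `lim_n cSAW n ^ (1/n)`, which by
submultiplicativity equals the infimum `⨅_{n ≥ 1} (cSAW n)^(1/n)`. -/
noncomputable def mu : ℝ := ⨅ n : ℕ, ((cSAW (n + 1) : ℝ)) ^ ((1 : ℝ) / (n + 1))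

/-- A self-avoiding bridge of length `n` on `ℤ²`: a self-avoiding walk `γ` from the
origin with `0 < y(γ k) ≤ y(γ n)` for all `1 ≤ k ≤ n`. -/
def IsBridge (n : ℕ) (γ : ℕ → ℤ × ℤ) : Prop :=
  IsSAW n γ ∧ ∀ k : ℕ, 0 < k → k ≤ n → 0 < (γ k).2 ∧ (γ k).2 ≤ (γ n).2

/-- The number of self-avoiding bridges of length `n` on `ℤ²`. -/
noncomputable def cSAB (n : ℕ) : ℕ := Nat.card {γ : ℕ → ℤ × ℤ // IsBridge n γ}

/-- A half-space self-avoiding walk of length `n` on `ℤ²`: a self-avoiding walk `γ`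
from the origin with `y(γ k) > 0` for all `0 < k ≤ n`. -/
def IsHSW (n : ℕ) (γ : ℕ → ℤ × ℤ) : Prop :=
  IsSAW n γ ∧ ∀ k : ℕ, 0 < k → k ≤ n → 0 < (γ k).2

/-- The number of half-space self-avoiding walks of length `n` on `ℤ²`. -/
noncomputable def cHSW (n : ℕ) : ℕ := Nat.card {γ : ℕ → ℤ × ℤ // IsHSW n γ}

/-!
Let `k` be the last time at which a walk `γ` of length `n` is lowest. The piece `γ_k, …, γ_n`,
translated to the origin, is a half-space walk because `k` is the *last* lowest time. The piece
`γ_k, …, γ_0` run backwards and preceded by the point `γ_k - (0, 1)` is, after translation, a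
half-space walk of length `k + 1` because `γ_k` is lowest. Since `γ` is recovered from `k` and the
two pieces, this injects `SAW_n` into `Σ_{k ≤ n} HSW_{k+1} × HSW_{n-k}`.
-/

namespace IsSAW

variable {n : ℕ} {γ : ℕ → ℤ × ℤ}

theorem abs_add_abs_le (h : IsSAW n γ) {i : ℕ} (hi : i ≤ n) :
    |(γ i).1| + |(γ i).2| ≤ i := by
  induction i with
  | zero => simp [h.1]
  | succ i ih =>
    have hstep := h.2.1 i hi
    have h1 := abs_sub_abs_le_abs_sub (γ (i + 1)).1 (γ i).1
    have h2 := abs_sub_abs_le_abs_sub (γ (i + 1)).2 (γ i).2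
    push_cast
    linarith [ih (by omega)]

theorem eq_of_forall_le_eq {γ' : ℕ → ℤ × ℤ} (h : IsSAW n γ) (h' : IsSAW n γ')
    (heq : ∀ i ≤ n, γ i = γ' i) : γ = γ' := by
  funext i
  rcases le_or_gt i n with hi | hi
  · exact heq i hi
  · rw [h.2.2.2 i hi.le, h'.2.2.2 i hi.le, heq n le_rfl]

end IsSAW

instance finite_isSAW (n : ℕ) : Finite {γ : ℕ → ℤ × ℤ // IsSAW n γ} := by
  let box : Set (ℤ × ℤ) := Set.Icc (-n, -n) (n, n)
  have mem_box (γ : {γ // IsSAW n γ}) (i : Fin (n + 1)) : γ.1 i ∈ box := by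
    have hi : (i : ℕ) ≤ n := Nat.lt_succ_iff.mp i.2
    have := γ.2.abs_add_abs_le hi
    have := neg_abs_le (γ.1 i).1
    have := le_abs_self (γ.1 i).1
    have := neg_abs_le (γ.1 i).2
    have := le_abs_self (γ.1 i).2
    simp only [box, Set.mem_Icc, Prod.le_def]
    omega
  have : Finite box := (Set.finite_Icc _ _).to_subtype
  refine Finite.of_injective (fun γ (i : Fin (n + 1)) => (⟨γ.1 i, mem_box γ i⟩ : box)) ?_
  intro γ γ' heq
  refine Subtype.ext (γ.2.eq_of_forall_le_eq γ'.2 fun i hi => ?_)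
  simpa using congrFun heq ⟨i, Nat.lt_succ_of_le hi⟩

instance finite_isHSW (n : ℕ) : Finite {γ : ℕ → ℤ × ℤ // IsHSW n γ} :=
  Finite.of_injective (fun γ : {γ // IsHSW n γ} => (⟨γ.1, γ.2.1⟩ : {γ // IsSAW n γ}))
    fun _ _ h => Subtype.ext (by simpa using congrArg Subtype.val h)

section Pieces

def shiftFrom (k : ℕ) (γ : ℕ → ℤ × ℤ) (j : ℕ) : ℤ × ℤ := γ (k + j) - γ k

def reverseUpTo (k : ℕ) (γ : ℕ → ℤ × ℤ) (j : ℕ) : ℤ × ℤ := γ (k - j) - γ k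

def prependStep (u : ℤ × ℤ) (δ : ℕ → ℤ × ℤ) : ℕ → ℤ × ℤ
  | 0 => 0
  | j + 1 => u + δ j

theorem prependStep_injective (u : ℤ × ℤ) : Function.Injective (prependStep u) :=
  fun _ _ h => funext fun j => add_left_cancel (congrFun h (j + 1))

variable {n k : ℕ} {γ δ : ℕ → ℤ × ℤ}

theorem IsSAW.isSAW_shiftFrom (h : IsSAW n γ) (hk : k ≤ n) : IsSAW (n - k) (shiftFrom k γ) := by
  refine ⟨by simp [shiftFrom, Prod.mk_zero_zero], fun i hi => ?_, fun i hi j hj hij => ?_,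
    fun i hi => ?_⟩
  · simpa [shiftFrom, ← add_assoc] using h.2.1 (k + i) (by omega)
  · have := h.2.2.1 (k + i) (by omega) (k + j) (by omega) (by simpa [shiftFrom] using hij)
    omega
  · simp only [shiftFrom, h.2.2.2 (k + i) (by omega), h.2.2.2 (k + (n - k)) (by omega)]

theorem IsSAW.isSAW_reverseUpTo (h : IsSAW n γ) (hk : k ≤ n) : IsSAW k (reverseUpTo k γ) := by
  refine ⟨by simp [reverseUpTo, Prod.mk_zero_zero], fun i hi => ?_, fun i hi j hj hij => ?_,
    fun i hi => ?_⟩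
  · have := h.2.1 (k - (i + 1)) (by omega)
    rw [show k - (i + 1) + 1 = k - i by omega] at this
    simp only [reverseUpTo, Prod.fst_sub, Prod.snd_sub, sub_sub_sub_cancel_right]
    rwa [abs_sub_comm, abs_sub_comm (γ _).2]
  · have := h.2.2.1 (k - i) (by omega) (k - j) (by omega) (by simpa [reverseUpTo] using hij)
    omega
  · simp [reverseUpTo, Nat.sub_eq_zero_of_le hi]

theorem IsSAW.isSAW_prependStep {u : ℤ × ℤ} (h : IsSAW n δ) (hu : |u.1| + |u.2| = 1)
    (hδ : ∀ i ≤ n, u + δ i ≠ 0) : IsSAW (n + 1) (prependStep u δ) := by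
  refine ⟨rfl, fun i hi => ?_, fun i hi j hj hij => ?_, fun i hi => ?_⟩
  · cases i with
    | zero => simpa [prependStep, h.1] using hu
    | succ i => simpa [prependStep] using h.2.1 i (by omega)
  · cases i <;> cases j <;> simp only [prependStep] at hij
    · rfl
    · exact absurd hij.symm (hδ _ (by omega))
    · exact absurd hij (hδ _ (by omega))
    · rw [h.2.2.1 _ (by omega) _ (by omega) (add_left_cancel hij)]
  · cases i with
    | zero => omega
    | succ i => simp [prependStep, h.2.2.2 i (by omega)]

theorem IsSAW.isHSW_prependStep_up (h : IsSAW n δ) (hδ : ∀ i ≤ n, 0 ≤ (δ i).2) :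
    IsHSW (n + 1) (prependStep (0, 1) δ) := by
  refine ⟨h.isSAW_prependStep (by simp) fun i hi h0 => ?_, fun j hj hjn => ?_⟩
  · have := congrArg Prod.snd h0
    simp only [Prod.snd_add, Prod.snd_zero] at this
    linarith [hδ i hi]
  · cases j with
    | zero => omega
    | succ j =>
      simp only [prependStep, Prod.snd_add]
      linarith [hδ j (by omega)]

theorem eq_of_reverseUpTo_eq_of_shiftFrom_eq {γ' : ℕ → ℤ × ℤ} (h0 : γ 0 = γ' 0)
    (hrev : reverseUpTo k γ = reverseUpTo k γ') (hshift : shiftFrom k γ = shiftFrom k γ') :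
    γ = γ' := by
  have hk : γ k = γ' k := by
    simpa [reverseUpTo, h0] using congrFun hrev k
  funext i
  rcases le_total i k with hi | hi
  · have := congrFun hrev (k - i)
    rwa [reverseUpTo, reverseUpTo, Nat.sub_sub_self hi, hk, sub_left_inj] at this
  · have := congrFun hshift (i - k)
    rwa [shiftFrom, shiftFrom, Nat.add_sub_cancel' hi, hk, sub_left_inj] at this

end Pieces

section LastLowest

def lastLowest (n : ℕ) (γ : ℕ → ℤ × ℤ) : ℕ :=
  Nat.findGreatest (fun i => ∀ j ≤ n, (γ i).2 ≤ (γ j).2) n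

variable (n : ℕ) (γ : ℕ → ℤ × ℤ)

theorem lastLowest_le : lastLowest n γ ≤ n := Nat.findGreatest_le n

theorem lastLowest_snd_le {j : ℕ} (hj : j ≤ n) : (γ (lastLowest n γ)).2 ≤ (γ j).2 := by
  obtain ⟨i, hi, hmin⟩ := (Finset.range (n + 1)).exists_min_image (fun j => (γ j).2)
    ⟨0, Finset.mem_range.mpr n.succ_pos⟩
  refine Nat.findGreatest_spec (P := fun i => ∀ j ≤ n, (γ i).2 ≤ (γ j).2)
    (Nat.lt_succ_iff.mp (Finset.mem_range.mp hi)) (fun j hj => ?_) j hj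
  exact hmin j (Finset.mem_range.mpr (Nat.lt_succ_of_le hj))

theorem lastLowest_snd_lt {i : ℕ} (hki : lastLowest n γ < i) (hin : i ≤ n) :
    (γ (lastLowest n γ)).2 < (γ i).2 := by
  have := Nat.findGreatest_is_greatest (P := fun i => ∀ j ≤ n, (γ i).2 ≤ (γ j).2) hki hin
  simp only [not_forall, not_le] at this
  obtain ⟨j, hj, hlt⟩ := this
  exact (lastLowest_snd_le n γ hj).trans_lt hlt

end LastLowest

def headPiece (n : ℕ) (γ : ℕ → ℤ × ℤ) : ℕ → ℤ × ℤ :=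
  prependStep (0, 1) (reverseUpTo (lastLowest n γ) γ)

def tailPiece (n : ℕ) (γ : ℕ → ℤ × ℤ) : ℕ → ℤ × ℤ :=
  shiftFrom (lastLowest n γ) γ

namespace IsSAW

variable {n : ℕ} {γ : ℕ → ℤ × ℤ}

theorem isHSW_headPiece (h : IsSAW n γ) : IsHSW (lastLowest n γ + 1) (headPiece n γ) :=
  (h.isSAW_reverseUpTo (lastLowest_le n γ)).isHSW_prependStep_up fun i _ => by
    have hi : lastLowest n γ - i ≤ n := (Nat.sub_le _ _).trans (lastLowest_le n γ)
    simpa [reverseUpTo] using lastLowest_snd_le n γ hi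

theorem isHSW_tailPiece (h : IsSAW n γ) : IsHSW (n - lastLowest n γ) (tailPiece n γ) :=
  ⟨h.isSAW_shiftFrom (lastLowest_le n γ), fun j hj hjn => by
    simpa [tailPiece, shiftFrom] using lastLowest_snd_lt n γ (i := lastLowest n γ + j)
      (by omega) (by omega)⟩

theorem eq_of_headPiece_eq_of_tailPiece_eq {γ' : ℕ → ℤ × ℤ}
    (h : IsSAW n γ) (h' : IsSAW n γ')
    (hk : lastLowest n γ = lastLowest n γ') (hhead : headPiece n γ = headPiece n γ')
    (htail : tailPiece n γ = tailPiece n γ') : γ = γ' := by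
  rw [headPiece, headPiece, ← hk] at hhead
  rw [tailPiece, tailPiece, ← hk] at htail
  exact eq_of_reverseUpTo_eq_of_shiftFrom_eq (h.1.trans h'.1.symm)
    (prependStep_injective _ hhead) htail

end IsSAW

/-- Decomposition at the final lowest point:
`|SAW_n| ≤ Σ_{k=0}^{n} |HSW_{k+1}| · |HSW_{n−k}|`. -/
theorem saw_le_sum_hsw (n : ℕ) :
    cSAW n ≤ ∑ k ∈ Finset.range (n + 1), cHSW (k + 1) * cHSW (n - k) := by
  let split (γ : {γ // IsSAW n γ}) :
      Σ k : Fin (n + 1), {δ // IsHSW (k + 1) δ} × {δ // IsHSW (n - k) δ} :=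
    ⟨⟨lastLowest n γ, Nat.lt_succ_of_le (lastLowest_le n γ)⟩,
      ⟨_, γ.2.isHSW_headPiece⟩, ⟨_, γ.2.isHSW_tailPiece⟩⟩
  have split_injective : Function.Injective split := fun γ γ' heq =>
    Subtype.ext <| γ.2.eq_of_headPiece_eq_of_tailPiece_eq γ'.2
      (congrArg (fun s => (s.1 : ℕ)) heq) (congrArg (fun s => s.2.1.1) heq)
      (congrArg (fun s => s.2.2.1) heq)
  refine (Nat.card_le_card_of_injective split split_injective).trans_eq ?_
  rw [Nat.card_sigma, ← Fin.sum_univ_eq_sum_range]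
  exact Finset.sum_congr rfl fun k _ => Nat.card_prod _ _
end

section
/- There exists a constant C > 0 (with d ≥ 2, here d = 2) such that for all n ∈ ℕ, the number of self-avoiding walks of length n on ℤ² starting at the origin satisfies |SAW_n| ≤ exp(C·n^{1/2}) · μ^n, where μ is the connective constant. -/
open Finset

section LastArgmax

variable {α : Type*} [LinearOrder α] (f : ℕ → α) (n : ℕ)

def lastArgmax : ℕ := Nat.findGreatest (fun k => ∀ j ≤ n, f j ≤ f k) n

theorem lastArgmax_le : lastArgmax f n ≤ n := Nat.findGreatest_le n

variable {f n}

theorem le_apply_lastArgmax {j : ℕ} (hj : j ≤ n) : f j ≤ f (lastArgmax f n) := by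
  obtain ⟨k, hk, hmax⟩ := (range (n + 1)).exists_max_image f ⟨0, by simp⟩
  refine Nat.findGreatest_spec (P := fun k => ∀ j ≤ n, f j ≤ f k) (m := k) ?_ ?_ j hj
  · simpa [Nat.lt_succ_iff] using hk
  · exact fun i hi => hmax i (by simpa [Nat.lt_succ_iff] using hi)

theorem apply_lt_apply_lastArgmax {j : ℕ} (hlt : lastArgmax f n < j) (hj : j ≤ n) :
    f j < f (lastArgmax f n) :=
  lt_of_not_ge fun hge =>
    Nat.findGreatest_is_greatest hlt hj fun _ hi => (le_apply_lastArgmax hi).trans hge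

end LastArgmax

theorem Finset.eq_and_eq_of_insert_eq_insert {α : Type*} [LinearOrder α] {a b : α}
    {s t : Finset α} (hs : ∀ x ∈ s, x < a) (ht : ∀ x ∈ t, x < b)
    (h : insert a s = insert b t) : a = b ∧ s = t := by
  have hab : a = b := by
    have ha : a ∈ insert b t := h ▸ mem_insert_self a s
    have hb : b ∈ insert a s := h ▸ mem_insert_self b t
    rcases mem_insert.mp ha with hab | hat
    · exact hab
    rcases mem_insert.mp hb with hba | hbs
    · exact hba.symm
    · exact absurd (ht a hat) (hs b hbs).not_gt
  subst hab
  refine ⟨rfl, ?_⟩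
  rw [← erase_insert (fun h => (hs a h).false), h, erase_insert fun h => (ht a h).false]

section Walks

variable {n : ℕ} {γ δ : ℕ → ℤ × ℤ}

theorem IsSAW.start (h : IsSAW n γ) : γ 0 = 0 := h.1

theorem IsSAW.step (h : IsSAW n γ) {i : ℕ} (hi : i < n) :
    |(γ (i + 1)).1 - (γ i).1| + |(γ (i + 1)).2 - (γ i).2| = 1 := h.2.1 i hi

theorem IsSAW.injOn (h : IsSAW n γ) {i j : ℕ} (hi : i ≤ n) (hj : j ≤ n) (hij : γ i = γ j) :
    i = j := h.2.2.1 i hi j hj hij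

theorem IsSAW.eq_of_le (h : IsSAW n γ) {i : ℕ} (hi : n ≤ i) : γ i = γ n := h.2.2.2 i hi

theorem IsSAW.abs_add_abs_le_s7 (h : IsSAW n γ) {k : ℕ} (hk : k ≤ n) :
    |(γ k).1| + |(γ k).2| ≤ k := by
  induction k with
  | zero => simp [h.start]
  | succ k ih =>
    have hstep := h.step (i := k) (by omega)
    have := ih (by omega)
    have := abs_sub_abs_le_abs_sub (γ (k + 1)).1 (γ k).1
    have := abs_sub_abs_le_abs_sub (γ (k + 1)).2 (γ k).2
    push_cast
    linarith

theorem IsSAW.snd_le (h : IsSAW n γ) {k : ℕ} (hk : k ≤ n) : (γ k).2 ≤ k := by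
  have := h.abs_add_abs_le_s7 hk
  have := abs_nonneg (γ k).1
  have := le_abs_self (γ k).2
  omega

theorem IsSAW.ext (hγ : IsSAW n γ) (hδ : IsSAW n δ) (h : ∀ k ≤ n, γ k = δ k) : γ = δ := by
  funext k
  rcases le_or_gt k n with hk | hk
  · exact h k hk
  · rw [hγ.eq_of_le hk.le, hδ.eq_of_le hk.le, h n le_rfl]

theorem isSAW_zero_iff : IsSAW 0 γ ↔ γ = 0 := by
  refine ⟨fun h => funext fun k => (h.eq_of_le k.zero_le).trans h.start, ?_⟩
  rintro rfl
  exact ⟨rfl, by simp, by simp, by simp⟩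

theorem IsHSW.isSAW (h : IsHSW n γ) : IsSAW n γ := h.1

theorem IsBridge.isSAW (h : IsBridge n γ) : IsSAW n γ := h.1

theorem isHSW_zero_iff : IsHSW 0 γ ↔ IsSAW 0 γ :=
  ⟨IsHSW.isSAW, fun h => ⟨h, by omega⟩⟩

theorem isBridge_zero_iff : IsBridge 0 γ ↔ IsSAW 0 γ :=
  ⟨IsBridge.isSAW, fun h => ⟨h, by omega⟩⟩

instance (n : ℕ) : Finite {γ : ℕ → ℤ × ℤ // IsSAW n γ} := by
  let box := Set.Icc (-(n : ℤ)) n ×ˢ Set.Icc (-(n : ℤ)) n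
  have mem_box : ∀ γ : {γ // IsSAW n γ}, ∀ i : Fin (n + 1), γ.1 i ∈ box := fun γ i => by
    have := γ.2.abs_add_abs_le_s7 (k := i) (by omega)
    have := abs_nonneg (γ.1 i).1
    have := abs_nonneg (γ.1 i).2
    simp only [box, Set.mem_prod, Set.mem_Icc, ← abs_le]
    omega
  refine Finite.of_injective (fun γ (i : Fin (n + 1)) => (⟨γ.1 i, mem_box γ i⟩ : box)) ?_
  intro γ δ h
  exact Subtype.ext <| γ.2.ext δ.2 fun k hk =>
    congrArg Subtype.val (congrFun h ⟨k, Nat.lt_succ_of_le hk⟩)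

instance (n : ℕ) : Finite {γ : ℕ → ℤ × ℤ // IsHSW n γ} :=
  Finite.of_injective _ (Subtype.impEmbedding _ _ fun _ => IsHSW.isSAW).injective

instance (n : ℕ) : Finite {γ : ℕ → ℤ × ℤ // IsBridge n γ} :=
  Finite.of_injective _ (Subtype.impEmbedding _ _ fun _ => IsBridge.isSAW).injective

theorem cSAB_le_cSAW (n : ℕ) : cSAB n ≤ cSAW n :=
  Nat.card_le_card_of_injective _ (Subtype.impEmbedding _ _ fun _ => IsBridge.isSAW).injective

theorem cSAW_zero : cSAW 0 = 1 := by
  refine Nat.card_eq_one_iff_exists.mpr ⟨⟨0, isSAW_zero_iff.mpr rfl⟩, fun γ => ?_⟩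
  exact Subtype.ext (isSAW_zero_iff.mp γ.2)

theorem cHSW_zero : cHSW 0 = 1 := by
  simp only [cHSW, isHSW_zero_iff]
  exact cSAW_zero

theorem cSAB_zero : cSAB 0 = 1 := by
  simp only [cSAB, isBridge_zero_iff]
  exact cSAW_zero

end Walks

section Surgery

variable {n a b m : ℕ} {γ δ γ' δ' : ℕ → ℤ × ℤ}

def subwalk (γ : ℕ → ℤ × ℤ) (a m : ℕ) : ℕ → ℤ × ℤ := fun k => γ (a + min k m) - γ a

def reversePrefix (γ : ℕ → ℤ × ℤ) (a : ℕ) : ℕ → ℤ × ℤ := fun k => γ (a - min k a) - γ a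

def append (a : ℕ) (γ δ : ℕ → ℤ × ℤ) : ℕ → ℤ × ℤ :=
  fun k => if k ≤ a then γ k else γ a + δ (k - a)

theorem isSAW_subwalk (h : IsSAW n γ) (ham : a + m ≤ n) : IsSAW m (subwalk γ a m) := by
  refine ⟨by simp [subwalk, Prod.mk_zero_zero], fun i hi => ?_, fun i hi j hj hij => ?_,
    fun i hi => ?_⟩
  · simpa [subwalk, min_eq_left hi.le, min_eq_left (Nat.succ_le_of_lt hi), ← add_assoc]
      using h.step (i := a + i) (by omega)
  · have := h.injOn (i := a + min i m) (j := a + min j m) (by omega) (by omega)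
      (sub_left_injective hij)
    omega
  · simp [subwalk, min_eq_right hi]

theorem isSAW_reversePrefix (h : IsSAW n γ) (ha : a ≤ n) : IsSAW a (reversePrefix γ a) := by
  refine ⟨by simp [reversePrefix, Prod.mk_zero_zero], fun i hi => ?_, fun i hi j hj hij => ?_,
    fun i hi => ?_⟩
  · have hstep := h.step (i := a - (i + 1)) (by omega)
    rw [show a - (i + 1) + 1 = a - i by omega] at hstep
    simp only [reversePrefix, min_eq_left hi.le, min_eq_left (Nat.succ_le_of_lt hi)]
    simpa [abs_sub_comm] using hstep
  · have := h.injOn (i := a - min i a) (j := a - min j a) (by omega) (by omega)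
      (sub_left_injective hij)
    omega
  · simp [reversePrefix, min_eq_right hi]

theorem eq_of_subwalk_eq (hγa : γ a = δ a) (h : subwalk γ a m = subwalk δ a m) {k : ℕ}
    (hak : a ≤ k) (hk : k ≤ a + m) : γ k = δ k := by
  have := congrFun h (k - a)
  simpa [subwalk, min_eq_left (show k - a ≤ m by omega), Nat.add_sub_cancel' hak, hγa] using this

theorem eq_of_reversePrefix_eq (hγ : γ 0 = 0) (hδ : δ 0 = 0)
    (h : reversePrefix γ a = reversePrefix δ a) {k : ℕ} (hk : k ≤ a) : γ k = δ k := by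
  have hend := congrFun h a
  simp only [reversePrefix, min_self, Nat.sub_self, hγ, hδ, zero_sub, neg_inj] at hend
  have := congrFun h (a - k)
  simpa [reversePrefix, min_eq_left (show a - k ≤ a by omega), Nat.sub_sub_self hk, hend]
    using this

theorem append_of_le {k : ℕ} (hk : k ≤ a) : append a γ δ k = γ k := if_pos hk

theorem append_of_ge (hδ : δ 0 = 0) {k : ℕ} (hk : a ≤ k) : append a γ δ k = γ a + δ (k - a) := by
  rcases hk.lt_or_eq with hk | rfl
  · exact if_neg (by omega)
  · simp [append, hδ]

theorem isSAW_append (hγ : IsSAW a γ) (hδ : IsSAW b δ)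
    (hdisj : ∀ i ≤ a, ∀ j, 0 < j → j ≤ b → γ i ≠ γ a + δ j) :
    IsSAW (a + b) (append a γ δ) := by
  refine ⟨by simp [append, hγ.start, Prod.mk_zero_zero], fun i hi => ?_, fun i hi j hj hij => ?_,
    fun i hi => ?_⟩
  · rcases Nat.lt_or_ge i a with hia | hia
    · rw [append_of_le hia, append_of_le hia.le]
      exact hγ.step hia
    · rw [append_of_ge hδ.start (by omega), append_of_ge hδ.start hia,
        show i + 1 - a = i - a + 1 by omega]
      simpa using hδ.step (i := i - a) (by omega)
  · rcases le_or_gt i a with hia | hia <;> rcases le_or_gt j a with hja | hja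
    · rw [append_of_le hia, append_of_le hja] at hij
      exact hγ.injOn hia hja hij
    · rw [append_of_le hia, append_of_ge hδ.start hja.le] at hij
      exact absurd hij (hdisj i hia (j - a) (by omega) (by omega))
    · rw [append_of_ge hδ.start hia.le, append_of_le hja] at hij
      exact absurd hij.symm (hdisj j hja (i - a) (by omega) (by omega))
    · rw [append_of_ge hδ.start hia.le, append_of_ge hδ.start hja.le] at hij
      have := hδ.injOn (i := i - a) (j := j - a) (by omega) (by omega) (add_left_cancel hij)
      omega
  · rw [append_of_ge hδ.start (by omega), append_of_ge hδ.start (by omega),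
      hδ.eq_of_le (i := i - a) (by omega), Nat.add_sub_cancel_left]

theorem eq_of_append_eq (hγ : IsSAW a γ) (hγ' : IsSAW a γ') (hδ : IsSAW b δ) (hδ' : IsSAW b δ')
    (h : append a γ δ = append a γ' δ') : γ = γ' ∧ δ = δ' := by
  have hfst : γ = γ' := hγ.ext hγ' fun k hk => by
    simpa [append_of_le hk] using congrFun h k
  subst hfst
  refine ⟨rfl, hδ.ext hδ' fun k _ => ?_⟩
  simpa [append_of_ge hδ.start (Nat.le_add_right a k),
    append_of_ge hδ'.start (Nat.le_add_right a k)] using congrFun h (a + k)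

end Surgery

section ConnectiveConstant

variable {n a b : ℕ} {γ δ : ℕ → ℤ × ℤ}

theorem cSAW_add_le (a b : ℕ) : cSAW (a + b) ≤ cSAW a * cSAW b := by
  let split (γ : {γ // IsSAW (a + b) γ}) : {γ // IsSAW a γ} × {γ // IsSAW b γ} :=
    (⟨subwalk γ.1 0 a, isSAW_subwalk γ.2 (by omega)⟩, ⟨subwalk γ.1 a b, isSAW_subwalk γ.2 le_rfl⟩)
  have split_injective : Function.Injective split := by
    rintro ⟨γ, hγ⟩ ⟨δ, hδ⟩ h
    simp only [split, Prod.mk.injEq, Subtype.mk.injEq] at h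
    have hfst : ∀ k ≤ a, γ k = δ k := fun k hk =>
      eq_of_subwalk_eq (hγ.start.trans hδ.start.symm) h.1 k.zero_le (by omega)
    refine Subtype.ext <| hγ.ext hδ fun k hk => ?_
    rcases le_or_gt k a with hka | hka
    · exact hfst k hka
    · exact eq_of_subwalk_eq (hfst a le_rfl) h.2 hka.le hk
  calc cSAW (a + b) ≤ Nat.card ({γ // IsSAW a γ} × {γ // IsSAW b γ}) :=
        Nat.card_le_card_of_injective split split_injective
    _ = cSAW a * cSAW b := Nat.card_prod _ _

theorem cSAW_mul_le_pow (N k : ℕ) : cSAW (N * k) ≤ cSAW N ^ k := by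
  induction k with
  | zero => simp [cSAW_zero]
  | succ k ih =>
    calc cSAW (N * (k + 1)) = cSAW (N * k + N) := rfl
      _ ≤ cSAW (N * k) * cSAW N := cSAW_add_le _ _
      _ ≤ cSAW N ^ (k + 1) := by rw [pow_succ]; exact Nat.mul_le_mul_right _ ih

theorem IsBridge.snd_le_end (h : IsBridge n γ) {k : ℕ} (hk : k ≤ n) : (γ k).2 ≤ (γ n).2 := by
  rcases Nat.eq_zero_or_pos k with rfl | hk0
  · rcases Nat.eq_zero_or_pos n with rfl | hn0
    · rfl
    · rw [h.isSAW.start]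
      exact (h.2 n hn0 le_rfl).1.le
  · exact (h.2 k hk0 hk).2

theorem isBridge_append (hγ : IsBridge a γ) (hδ : IsBridge b δ) :
    IsBridge (a + b) (append a γ δ) := by
  have hγa : 0 ≤ (γ a).2 := by simpa [hγ.isSAW.start] using hγ.snd_le_end a.zero_le
  have hδb : 0 ≤ (δ b).2 := by simpa [hδ.isSAW.start] using hδ.snd_le_end b.zero_le
  have hdisj : ∀ i ≤ a, ∀ j, 0 < j → j ≤ b → γ i ≠ γ a + δ j := fun i hi j hj0 hj heq => by
    have := congrArg Prod.snd heq
    have := hγ.snd_le_end hi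
    have := (hδ.2 j hj0 hj).1
    simp only [Prod.snd_add] at *
    omega
  refine ⟨isSAW_append hγ.isSAW hδ.isSAW hdisj, fun k hk0 hk => ?_⟩
  rw [append_of_ge hδ.isSAW.start (Nat.le_add_right a b), Nat.add_sub_cancel_left]
  rcases le_or_gt k a with hka | hka
  · rw [append_of_le hka]
    have := hγ.2 k hk0 hka
    simp only [Prod.snd_add]
    omega
  · rw [append_of_ge hδ.isSAW.start hka.le]
    have := hδ.2 (k - a) (by omega) (by omega)
    simp only [Prod.snd_add]
    omega

theorem cSAB_mul_le (a b : ℕ) : cSAB a * cSAB b ≤ cSAB (a + b) := by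
  let glue (p : {γ // IsBridge a γ} × {γ // IsBridge b γ}) : {γ // IsBridge (a + b) γ} :=
    ⟨append a p.1.1 p.2.1, isBridge_append p.1.2 p.2.2⟩
  have glue_injective : Function.Injective glue := by
    rintro ⟨⟨γ, hγ⟩, ⟨δ, hδ⟩⟩ ⟨⟨γ', hγ'⟩, ⟨δ', hδ'⟩⟩ h
    obtain ⟨rfl, rfl⟩ := eq_of_append_eq hγ.isSAW hγ'.isSAW hδ.isSAW hδ'.isSAW
      (congrArg Subtype.val h)
    rfl
  calc cSAB a * cSAB b = Nat.card ({γ // IsBridge a γ} × {γ // IsBridge b γ}) :=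
        (Nat.card_prod _ _).symm
    _ ≤ cSAB (a + b) := Nat.card_le_card_of_injective glue glue_injective

theorem cSAB_pow_le_mul (n k : ℕ) : cSAB n ^ k ≤ cSAB (n * k) := by
  induction k with
  | zero => simp [cSAB_zero]
  | succ k ih =>
    calc cSAB n ^ (k + 1) ≤ cSAB (n * k) * cSAB n := by
          rw [pow_succ]; exact Nat.mul_le_mul_right _ ih
      _ ≤ cSAB (n * (k + 1)) := cSAB_mul_le _ _

theorem cSAB_pow_le_cSAW_pow (n N : ℕ) : cSAB n ^ N ≤ cSAW N ^ n :=
  calc cSAB n ^ N ≤ cSAB (n * N) := cSAB_pow_le_mul n N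
    _ ≤ cSAW (N * n) := Nat.mul_comm n N ▸ cSAB_le_cSAW _
    _ ≤ cSAW N ^ n := cSAW_mul_le_pow N n

theorem Real.rpow_inv_le_rpow_inv_of_pow_le_pow {x y : ℝ} (hx : 0 ≤ x) (hy : 0 ≤ y) {m n : ℕ}
    (hm : m ≠ 0) (hn : n ≠ 0) (h : x ^ m ≤ y ^ n) : x ^ (n⁻¹ : ℝ) ≤ y ^ (m⁻¹ : ℝ) := by
  have hmn : (m * n : ℝ) ≠ 0 := by positivity
  calc x ^ (n⁻¹ : ℝ) = (x ^ m) ^ ((m * n : ℝ)⁻¹) := by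
        rw [← Real.rpow_natCast, ← Real.rpow_mul hx]; congr 1; field_simp
    _ ≤ (y ^ n) ^ ((m * n : ℝ)⁻¹) := Real.rpow_le_rpow (by positivity) h (by positivity)
    _ = y ^ (m⁻¹ : ℝ) := by
        rw [← Real.rpow_natCast, ← Real.rpow_mul hy]; congr 1; field_simp

theorem mu_nonneg : 0 ≤ mu := Real.iInf_nonneg fun _ => Real.rpow_nonneg (Nat.cast_nonneg _) _

theorem cSAB_le_mu_pow (n : ℕ) : (cSAB n : ℝ) ≤ mu ^ n := by
  rcases Nat.eq_zero_or_pos n with rfl | hn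
  · simp [cSAB_zero]
  have hroot : (cSAB n : ℝ) ^ (n⁻¹ : ℝ) ≤ mu := le_ciInf fun N => by
    rw [one_div, show (N : ℝ) + 1 = ((N + 1 : ℕ) : ℝ) by push_cast; rfl]
    exact Real.rpow_inv_le_rpow_inv_of_pow_le_pow (Nat.cast_nonneg _) (Nat.cast_nonneg _)
      N.succ_ne_zero hn.ne' (by exact_mod_cast cSAB_pow_le_cSAW_pow n (N + 1))
  calc (cSAB n : ℝ) = ((cSAB n : ℝ) ^ (n⁻¹ : ℝ)) ^ n :=
        (Real.rpow_inv_natCast_pow (Nat.cast_nonneg _) hn.ne').symm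
    _ ≤ mu ^ n := pow_le_pow_left₀ (Real.rpow_nonneg (Nat.cast_nonneg _) _) hroot n

end ConnectiveConstant

section Splitting

variable {n L : ℕ} {γ ρ : ℕ → ℤ × ℤ}

def upStep : ℕ → ℤ × ℤ := fun k => if k = 0 then 0 else (0, 1)

theorem isSAW_upStep : IsSAW 1 upStep := by
  refine ⟨rfl, fun i hi => ?_, fun i hi j hj hij => ?_, fun i hi => ?_⟩
  · obtain rfl : i = 0 := by omega
    simp [upStep]
  · interval_cases i <;> interval_cases j <;> simp_all [upStep, Prod.ext_iff]
  · simp [upStep, show i ≠ 0 by omega]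

theorem isHSW_append_upStep (h : IsSAW L ρ) (hy : ∀ k ≤ L, 0 ≤ (ρ k).2) :
    IsHSW (1 + L) (append 1 upStep ρ) := by
  have hdisj : ∀ i ≤ 1, ∀ j, 0 < j → j ≤ L → upStep i ≠ upStep 1 + ρ j := by
    intro i hi j hj0 hj heq
    interval_cases i
    · have := hy j hj
      have := congrArg Prod.snd heq
      simp only [upStep, if_pos, if_neg one_ne_zero, Prod.snd_zero, Prod.snd_add] at this
      omega
    · have := h.injOn hj L.zero_le ((add_eq_left.mp heq.symm).trans h.start.symm)
      omega
  refine ⟨isSAW_append isSAW_upStep h hdisj, fun k hk0 hk => ?_⟩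
  rw [append_of_ge h.start (show 1 ≤ k from hk0)]
  have := hy (k - 1) (by omega)
  simp only [upStep, if_neg one_ne_zero, Prod.snd_add]
  omega

def lastMinTime (n : ℕ) (γ : ℕ → ℤ × ℤ) : ℕ := lastArgmax (fun k => -(γ k).2) n

theorem lastMinTime_le : lastMinTime n γ ≤ n := lastArgmax_le _ _

theorem snd_lastMinTime_le {k : ℕ} (hk : k ≤ n) : (γ (lastMinTime n γ)).2 ≤ (γ k).2 :=
  neg_le_neg_iff.mp (le_apply_lastArgmax (f := fun k => -(γ k).2) hk)

theorem snd_lastMinTime_lt {k : ℕ} (hlt : lastMinTime n γ < k) (hk : k ≤ n) :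
    (γ (lastMinTime n γ)).2 < (γ k).2 :=
  neg_lt_neg_iff.mp (apply_lt_apply_lastArgmax (f := fun k => -(γ k).2) hlt hk)

theorem isHSW_beforeLastMin (h : IsSAW n γ) :
    IsHSW (lastMinTime n γ + 1) (append 1 upStep (reversePrefix γ (lastMinTime n γ))) := by
  rw [Nat.add_comm]
  refine isHSW_append_upStep (isSAW_reversePrefix h lastMinTime_le) fun k _ => ?_
  have := snd_lastMinTime_le (γ := γ) (k := lastMinTime n γ - min k (lastMinTime n γ))
    (le_trans (Nat.sub_le _ _) lastMinTime_le)
  simp only [reversePrefix, Prod.snd_sub]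
  omega

theorem isHSW_afterLastMin (h : IsSAW n γ) :
    IsHSW (n - lastMinTime n γ) (subwalk γ (lastMinTime n γ) (n - lastMinTime n γ)) := by
  have ht : lastMinTime n γ ≤ n := lastMinTime_le
  refine ⟨isSAW_subwalk h (by omega), fun k hk0 hk => ?_⟩
  have := snd_lastMinTime_lt (n := n) (γ := γ) (k := lastMinTime n γ + min k (n - lastMinTime n γ))
    (by omega) (by omega)
  simp only [subwalk, Prod.snd_sub]
  omega

theorem cSAW_le_sum_cHSW (n : ℕ) :
    cSAW n ≤ ∑ i ∈ range (n + 1), cHSW (i + 1) * cHSW (n - i) := by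
  let split (γ : {γ // IsSAW n γ}) :
      Σ i : Fin (n + 1), {γ // IsHSW (i + 1) γ} × {γ // IsHSW (n - i) γ} :=
    ⟨⟨lastMinTime n γ.1, Nat.lt_succ_of_le lastMinTime_le⟩,
      ⟨_, isHSW_beforeLastMin γ.2⟩, ⟨_, isHSW_afterLastMin γ.2⟩⟩
  have split_injective : Function.Injective split := by
    rintro ⟨γ, hγ⟩ ⟨δ, hδ⟩ h
    have ht : lastMinTime n δ = lastMinTime n γ := (congrArg (fun p => p.1.1) h).symm
    have hbefore := (eq_of_append_eq isSAW_upStep isSAW_upStep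
      (isSAW_reversePrefix hγ lastMinTime_le) (ht ▸ isSAW_reversePrefix hδ lastMinTime_le)
      (congrArg (fun p => p.2.1.1) h)).2
    have hafter : subwalk γ _ _ = subwalk δ _ _ := congrArg (fun p => p.2.2.1) h
    simp only [ht] at hbefore hafter
    have hfst : ∀ k ≤ lastMinTime n γ, γ k = δ k := fun k hk =>
      eq_of_reversePrefix_eq hγ.start hδ.start hbefore hk
    refine Subtype.ext <| hγ.ext hδ fun k hk => ?_
    rcases le_or_gt k (lastMinTime n γ) with hkt | hkt
    · exact hfst k hkt
    · exact eq_of_subwalk_eq (hfst _ le_rfl) hafter hkt.le (by omega)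
  calc cSAW n ≤ _ := Nat.card_le_card_of_injective split split_injective
    _ = ∑ i ∈ range (n + 1), cHSW (i + 1) * cHSW (n - i) := by
      rw [Nat.card_sigma, ← Fin.sum_univ_eq_sum_range (fun i => cHSW (i + 1) * cHSW (n - i))]
      simp only [Nat.card_prod, cHSW]

end Splitting

section Reflection

variable {n k : ℕ} {c : ℤ} {γ δ : ℕ → ℤ × ℤ}

def lastMaxTime (n : ℕ) (γ : ℕ → ℤ × ℤ) : ℕ := lastArgmax (fun k => (γ k).2) n

def maxHeight (n : ℕ) (γ : ℕ → ℤ × ℤ) : ℤ := (γ (lastMaxTime n γ)).2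

def minAfterMax (n : ℕ) (γ : ℕ → ℤ × ℤ) : ℤ :=
  (Icc (lastMaxTime n γ) n).inf' (nonempty_Icc.mpr (lastArgmax_le _ _)) fun k => (γ k).2

def spanAfterMax (n : ℕ) (γ : ℕ → ℤ × ℤ) : ℤ := maxHeight n γ - minAfterMax n γ

def reflectAfterMax (n : ℕ) (γ : ℕ → ℤ × ℤ) : ℕ → ℤ × ℤ :=
  fun k => if k ≤ lastMaxTime n γ then γ k else ((γ k).1, 2 * maxHeight n γ - (γ k).2)

theorem lastMaxTime_le : lastMaxTime n γ ≤ n := lastArgmax_le _ _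

theorem snd_le_maxHeight (hk : k ≤ n) : (γ k).2 ≤ maxHeight n γ :=
  le_apply_lastArgmax (f := fun k => (γ k).2) hk

theorem snd_lt_maxHeight (hlt : lastMaxTime n γ < k) (hk : k ≤ n) : (γ k).2 < maxHeight n γ :=
  apply_lt_apply_lastArgmax (f := fun k => (γ k).2) hlt hk

theorem maxHeight_eq_of_forall_le (hle : ∀ k ≤ n, (γ k).2 ≤ c) (hk : k ≤ n) (hc : (γ k).2 = c) :
    maxHeight n γ = c :=
  le_antisymm (hle _ lastMaxTime_le) (hc ▸ snd_le_maxHeight hk)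

theorem minAfterMax_le (htk : lastMaxTime n γ ≤ k) (hk : k ≤ n) : minAfterMax n γ ≤ (γ k).2 :=
  inf'_le _ (mem_Icc.mpr ⟨htk, hk⟩)

theorem le_minAfterMax (h : ∀ k, lastMaxTime n γ ≤ k → k ≤ n → c ≤ (γ k).2) :
    c ≤ minAfterMax n γ :=
  le_inf' _ _ fun k hk => h k (mem_Icc.mp hk).1 (mem_Icc.mp hk).2

theorem exists_snd_eq_minAfterMax :
    ∃ k, lastMaxTime n γ ≤ k ∧ k ≤ n ∧ (γ k).2 = minAfterMax n γ := by
  obtain ⟨k, hk, hmin⟩ := exists_mem_eq_inf' (nonempty_Icc.mpr (lastMaxTime_le (n := n) (γ := γ)))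
    fun k => (γ k).2
  exact ⟨k, (mem_Icc.mp hk).1, (mem_Icc.mp hk).2, hmin.symm⟩

theorem minAfterMax_le_maxHeight : minAfterMax n γ ≤ maxHeight n γ :=
  minAfterMax_le le_rfl lastMaxTime_le

theorem one_le_spanAfterMax (h : lastMaxTime n γ ≠ n) : 1 ≤ spanAfterMax n γ := by
  have := minAfterMax_le (n := n) (γ := γ) lastMaxTime_le le_rfl
  have := snd_lt_maxHeight (γ := γ) (lt_of_le_of_ne lastMaxTime_le h) le_rfl
  unfold spanAfterMax
  omega

theorem reflectAfterMax_of_le (hk : k ≤ lastMaxTime n γ) : reflectAfterMax n γ k = γ k := if_pos hk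

theorem reflectAfterMax_of_ge (hk : lastMaxTime n γ ≤ k) :
    reflectAfterMax n γ k = ((γ k).1, 2 * maxHeight n γ - (γ k).2) := by
  rcases hk.lt_or_eq with hk | rfl
  · exact if_neg (by omega)
  · simp [reflectAfterMax, maxHeight, two_mul]

theorem maxHeight_lt_snd_reflectAfterMax (hlt : lastMaxTime n γ < k) (hk : k ≤ n) :
    maxHeight n γ < (reflectAfterMax n γ k).2 := by
  rw [reflectAfterMax_of_ge hlt.le]
  have := snd_lt_maxHeight hlt hk
  simp only
  omega

theorem maxHeight_reflectAfterMax :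
    maxHeight n (reflectAfterMax n γ) = 2 * maxHeight n γ - minAfterMax n γ := by
  obtain ⟨w, htw, hw, hmin⟩ := exists_snd_eq_minAfterMax (n := n) (γ := γ)
  refine maxHeight_eq_of_forall_le (fun k hk => ?_) hw ?_
  · have := minAfterMax_le_maxHeight (n := n) (γ := γ)
    rcases le_total k (lastMaxTime n γ) with hkt | hkt
    · rw [reflectAfterMax_of_le hkt]
      have := snd_le_maxHeight (γ := γ) hk
      omega
    · rw [reflectAfterMax_of_ge hkt]
      have := minAfterMax_le hkt hk
      simp only
      omega
  · rw [reflectAfterMax_of_ge htw, hmin]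

theorem lastMaxTime_lt_lastMaxTime_reflectAfterMax (h : lastMaxTime n γ ≠ n) :
    lastMaxTime n γ < lastMaxTime n (reflectAfterMax n γ) := by
  by_contra! hle
  have hA := maxHeight_reflectAfterMax (n := n) (γ := γ)
  have hspan := one_le_spanAfterMax h
  have := snd_le_maxHeight (γ := γ) (hle.trans lastMaxTime_le)
  rw [maxHeight, reflectAfterMax_of_le hle] at hA
  unfold spanAfterMax at hspan
  omega

theorem spanAfterMax_reflectAfterMax_lt (h : lastMaxTime n γ ≠ n) :
    spanAfterMax n (reflectAfterMax n γ) < spanAfterMax n γ := by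
  have hmin : maxHeight n γ + 1 ≤ minAfterMax n (reflectAfterMax n γ) :=
    le_minAfterMax fun k hk hkn => maxHeight_lt_snd_reflectAfterMax
      ((lastMaxTime_lt_lastMaxTime_reflectAfterMax h).trans_le hk) hkn
  unfold spanAfterMax
  rw [maxHeight_reflectAfterMax]
  omega

theorem isSAW_reflectAfterMax (h : IsSAW n γ) : IsSAW n (reflectAfterMax n γ) := by
  refine ⟨?_, fun i hi => ?_, fun i hi j hj hij => ?_, fun i hi => ?_⟩
  · rw [reflectAfterMax_of_le (Nat.zero_le _), h.start]; rfl
  · rcases Nat.lt_or_ge i (lastMaxTime n γ) with hit | hit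
    · rw [reflectAfterMax_of_le hit, reflectAfterMax_of_le hit.le]
      exact h.step hi
    · rw [reflectAfterMax_of_ge (hit.trans i.le_succ), reflectAfterMax_of_ge hit]
      have := h.step hi
      rw [abs_sub_comm (γ (i + 1)).2] at this
      simp only
      rwa [sub_sub_sub_cancel_left]
  · rcases le_or_gt i (lastMaxTime n γ) with hit | hit <;>
      rcases le_or_gt j (lastMaxTime n γ) with hjt | hjt
    · rw [reflectAfterMax_of_le hit, reflectAfterMax_of_le hjt] at hij
      exact h.injOn hi hj hij
    · have := congrArg Prod.snd hij
      rw [reflectAfterMax_of_le hit] at this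
      have := snd_le_maxHeight (γ := γ) hi
      have := maxHeight_lt_snd_reflectAfterMax hjt hj
      omega
    · have := congrArg Prod.snd hij
      rw [reflectAfterMax_of_le hjt] at this
      have := snd_le_maxHeight (γ := γ) hj
      have := maxHeight_lt_snd_reflectAfterMax hit hi
      omega
    · rw [reflectAfterMax_of_ge hit.le, reflectAfterMax_of_ge hjt.le, Prod.mk.injEq,
        sub_right_inj] at hij
      exact h.injOn hi hj (Prod.ext hij.1 hij.2)
  · rw [reflectAfterMax_of_ge (lastMaxTime_le.trans hi), reflectAfterMax_of_ge lastMaxTime_le,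
      h.eq_of_le hi]

theorem isHSW_reflectAfterMax (h : IsHSW n γ) : IsHSW n (reflectAfterMax n γ) := by
  refine ⟨isSAW_reflectAfterMax h.isSAW, fun k hk0 hk => ?_⟩
  rcases le_or_gt k (lastMaxTime n γ) with hkt | hkt
  · rw [reflectAfterMax_of_le hkt]
    exact h.2 k hk0 hk
  · have := maxHeight_lt_snd_reflectAfterMax hkt hk
    have := snd_le_maxHeight (γ := γ) hk
    have := h.2 k hk0 hk
    omega

theorem not_lastMaxTime_lt_of_reflectAfterMax_eq (hA : maxHeight n γ = maxHeight n δ)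
    (h : reflectAfterMax n γ = reflectAfterMax n δ) : ¬ lastMaxTime n γ < lastMaxTime n δ := by
  intro hlt
  have := maxHeight_lt_snd_reflectAfterMax hlt lastMaxTime_le
  rw [h, reflectAfterMax_of_le le_rfl] at this
  exact this.ne' hA.symm

theorem eq_of_reflectAfterMax_eq (hA : maxHeight n γ = maxHeight n δ)
    (h : reflectAfterMax n γ = reflectAfterMax n δ) : γ = δ := by
  have ht : lastMaxTime n γ = lastMaxTime n δ :=
    le_antisymm (not_lt.mp (not_lastMaxTime_lt_of_reflectAfterMax_eq hA.symm h.symm))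
      (not_lt.mp (not_lastMaxTime_lt_of_reflectAfterMax_eq hA h))
  funext k
  have hk := congrFun h k
  rcases le_total k (lastMaxTime n γ) with hkt | hkt
  · rwa [reflectAfterMax_of_le hkt, reflectAfterMax_of_le (ht ▸ hkt)] at hk
  · rw [reflectAfterMax_of_ge hkt, reflectAfterMax_of_ge (ht ▸ hkt), hA, Prod.mk.injEq,
      sub_right_inj] at hk
    exact Prod.ext hk.1 hk.2

end Reflection

section Unfolding

variable {n : ℕ} {γ δ : ℕ → ℤ × ℤ}

/- `unfoldWalk` reflects the walk after its last highest point until it is a bridge, and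
`unfoldParts` collects the spans of the reflected parts. `fuel` bounds the number of
reflections; `fuel = n` suffices because the span strictly decreases. -/
def unfoldParts (n : ℕ) : ℕ → (ℕ → ℤ × ℤ) → Finset ℤ
  | 0, _ => ∅
  | fuel + 1, γ => if lastMaxTime n γ = n then ∅ else
      insert (spanAfterMax n γ) (unfoldParts n fuel (reflectAfterMax n γ))

def unfoldWalk (n : ℕ) : ℕ → (ℕ → ℤ × ℤ) → ℕ → ℤ × ℤ
  | 0, γ => γ
  | fuel + 1, γ => if lastMaxTime n γ = n then γ else unfoldWalk n fuel (reflectAfterMax n γ)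

theorem mem_unfoldParts {fuel : ℕ} {x : ℤ} (hx : x ∈ unfoldParts n fuel γ) :
    1 ≤ x ∧ x ≤ spanAfterMax n γ := by
  induction fuel generalizing γ with
  | zero => simp [unfoldParts] at hx
  | succ fuel ih =>
    by_cases ht : lastMaxTime n γ = n
    · simp [unfoldParts, ht] at hx
    simp only [unfoldParts, if_neg ht] at hx
    rcases mem_insert.mp hx with rfl | hx
    · exact ⟨one_le_spanAfterMax ht, le_rfl⟩
    · have := ih hx
      have := spanAfterMax_reflectAfterMax_lt ht
      omega

theorem spanAfterMax_notMem_unfoldParts_reflectAfterMax (fuel : ℕ) (ht : lastMaxTime n γ ≠ n) :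
    spanAfterMax n γ ∉ unfoldParts n fuel (reflectAfterMax n γ) := fun hmem =>
  (spanAfterMax_reflectAfterMax_lt ht).not_ge (mem_unfoldParts hmem).2

theorem maxHeight_unfoldWalk (fuel : ℕ) :
    maxHeight n (unfoldWalk n fuel γ) = maxHeight n γ + ∑ x ∈ unfoldParts n fuel γ, x := by
  induction fuel generalizing γ with
  | zero => simp [unfoldWalk, unfoldParts]
  | succ fuel ih =>
    by_cases ht : lastMaxTime n γ = n
    · simp [unfoldWalk, unfoldParts, ht]
    rw [unfoldWalk, unfoldParts, if_neg ht, if_neg ht, ih, maxHeight_reflectAfterMax,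
      sum_insert (spanAfterMax_notMem_unfoldParts_reflectAfterMax fuel ht), spanAfterMax]
    ring

theorem isHSW_unfoldWalk (h : IsHSW n γ) (fuel : ℕ) : IsHSW n (unfoldWalk n fuel γ) := by
  induction fuel generalizing γ with
  | zero => exact h
  | succ fuel ih =>
    by_cases ht : lastMaxTime n γ = n
    · simpa [unfoldWalk, ht] using h
    · simpa [unfoldWalk, ht] using ih (isHSW_reflectAfterMax h)

theorem lastMaxTime_unfoldWalk {fuel : ℕ} (hfuel : spanAfterMax n γ ≤ fuel) :
    lastMaxTime n (unfoldWalk n fuel γ) = n := by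
  induction fuel generalizing γ with
  | zero =>
    by_contra ht
    exact absurd hfuel (not_le.mpr (one_le_spanAfterMax ht))
  | succ fuel ih =>
    by_cases ht : lastMaxTime n γ = n
    · simp [unfoldWalk, ht]
    · rw [unfoldWalk, if_neg ht]
      have := spanAfterMax_reflectAfterMax_lt ht
      exact ih (by push_cast at hfuel; omega)

theorem IsHSW.isBridge_of_lastMaxTime_eq (h : IsHSW n γ) (ht : lastMaxTime n γ = n) :
    IsBridge n γ :=
  ⟨h.isSAW, fun k hk0 hk => ⟨h.2 k hk0 hk, ht ▸ snd_le_maxHeight hk⟩⟩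

theorem eq_of_unfold_eq {fuel : ℕ} (hA : maxHeight n γ = maxHeight n δ)
    (hparts : unfoldParts n fuel γ = unfoldParts n fuel δ)
    (hwalk : unfoldWalk n fuel γ = unfoldWalk n fuel δ) : γ = δ := by
  induction fuel generalizing γ δ with
  | zero => exact hwalk
  | succ fuel ih =>
    by_cases hγ : lastMaxTime n γ = n <;> by_cases hδ : lastMaxTime n δ = n
    · simpa [unfoldWalk, hγ, hδ] using hwalk
    · simp only [unfoldParts, if_pos hγ, if_neg hδ] at hparts
      exact absurd hparts.symm (insert_ne_empty _ _)
    · simp only [unfoldParts, if_neg hγ, if_pos hδ] at hparts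
      exact absurd hparts (insert_ne_empty _ _)
    simp only [unfoldParts, unfoldWalk, if_neg hγ, if_neg hδ] at hparts hwalk
    obtain ⟨hspan, hparts'⟩ := eq_and_eq_of_insert_eq_insert
      (fun x hx => (mem_unfoldParts hx).2.trans_lt (spanAfterMax_reflectAfterMax_lt hγ))
      (fun x hx => (mem_unfoldParts hx).2.trans_lt (spanAfterMax_reflectAfterMax_lt hδ)) hparts
    have hA' : maxHeight n (reflectAfterMax n γ) = maxHeight n (reflectAfterMax n δ) := by
      rw [maxHeight_reflectAfterMax, maxHeight_reflectAfterMax]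
      unfold spanAfterMax at hspan
      omega
    exact eq_of_reflectAfterMax_eq hA (ih hA' hparts' hwalk)

end Unfolding

section HalfSpaceWalks

variable {n : ℕ} {γ : ℕ → ℤ × ℤ}

noncomputable def boundedDistinctParts (n : ℕ) : Finset (Finset ℤ) :=
  (Icc (1 : ℤ) n).powerset.filter fun S => ∑ x ∈ S, x ≤ n

theorem IsSAW.maxHeight_le (h : IsSAW n γ) : maxHeight n γ ≤ n :=
  (h.snd_le lastMaxTime_le).trans (by exact_mod_cast lastMaxTime_le)

theorem IsHSW.one_le_minAfterMax (h : IsHSW n γ) (hn : 1 ≤ n) : 1 ≤ minAfterMax n γ := by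
  have hpos : 0 < lastMaxTime n γ := by
    by_contra! h0
    have := snd_le_maxHeight (γ := γ) hn
    rw [maxHeight, Nat.le_zero.mp h0, h.isSAW.start] at this
    exact this.not_gt (h.2 1 one_pos hn)
  exact le_minAfterMax fun k htk hk => h.2 k (hpos.trans_le htk) hk

theorem IsHSW.spanAfterMax_lt_maxHeight (h : IsHSW n γ) (hn : 1 ≤ n) :
    spanAfterMax n γ < maxHeight n γ := by
  have := h.one_le_minAfterMax hn
  unfold spanAfterMax
  omega

theorem isBridge_unfoldWalk (h : IsHSW n γ) (hn : 1 ≤ n) :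
    IsBridge n (unfoldWalk n n γ) :=
  (isHSW_unfoldWalk h n).isBridge_of_lastMaxTime_eq <| lastMaxTime_unfoldWalk <|
    (h.spanAfterMax_lt_maxHeight hn).le.trans h.isSAW.maxHeight_le

theorem IsHSW.insert_maxHeight_unfoldParts_mem (h : IsHSW n γ) (hn : 1 ≤ n) :
    insert (maxHeight n γ) (unfoldParts n n γ) ∈ boundedDistinctParts n := by
  have hspan := h.spanAfterMax_lt_maxHeight hn
  have hA := h.isSAW.maxHeight_le
  have hnotMem : maxHeight n γ ∉ unfoldParts n n γ := fun hmem =>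
    (mem_unfoldParts hmem).2.not_gt hspan
  refine mem_filter.mpr ⟨mem_powerset.mpr fun x hx => ?_, ?_⟩
  · rcases mem_insert.mp hx with rfl | hx
    · have := minAfterMax_le_maxHeight (n := n) (γ := γ)
      have := h.one_le_minAfterMax hn
      exact mem_Icc.mpr ⟨by omega, hA⟩
    · have := mem_unfoldParts hx
      exact mem_Icc.mpr ⟨this.1, by omega⟩
  · rw [sum_insert hnotMem, ← maxHeight_unfoldWalk]
    exact (isHSW_unfoldWalk h n).isSAW.maxHeight_le

theorem cHSW_le_card_mul_cSAB (hn : 1 ≤ n) :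
    cHSW n ≤ #(boundedDistinctParts n) * cSAB n := by
  let unfold (γ : {γ // IsHSW n γ}) :
      {S // S ∈ boundedDistinctParts n} × {γ // IsBridge n γ} :=
    (⟨_, γ.2.insert_maxHeight_unfoldParts_mem hn⟩, ⟨_, isBridge_unfoldWalk γ.2 hn⟩)
  have unfold_injective : Function.Injective unfold := by
    rintro ⟨γ, hγ⟩ ⟨δ, hδ⟩ h
    obtain ⟨hA, hparts⟩ := eq_and_eq_of_insert_eq_insert
      (fun x hx => (mem_unfoldParts hx).2.trans_lt (hγ.spanAfterMax_lt_maxHeight hn))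
      (fun x hx => (mem_unfoldParts hx).2.trans_lt (hδ.spanAfterMax_lt_maxHeight hn))
      (congrArg (fun p => p.1.1) h)
    exact Subtype.ext (eq_of_unfold_eq hA hparts (congrArg (fun p => p.2.1) h))
  calc cHSW n ≤ Nat.card ({S // S ∈ boundedDistinctParts n} × {γ // IsBridge n γ}) :=
        Nat.card_le_card_of_injective unfold unfold_injective
    _ = #(boundedDistinctParts n) * cSAB n := by
        rw [Nat.card_prod, Nat.card_eq_finsetCard]; rfl

end HalfSpaceWalks

section DistinctParts

open Real

theorem sum_exp_neg_mul_Icc_le {t : ℝ} (ht : 0 < t) (n : ℕ) :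
    ∑ k ∈ Icc (1 : ℤ) n, exp (-(t * k)) ≤ t⁻¹ := by
  set x := exp (-t)
  have hx0 : 0 < x := exp_pos _
  have hx1 : x < 1 := exp_lt_one_iff.mpr (neg_lt_zero.mpr ht)
  have hterm : ∀ j : ℕ, exp (-(t * ((1 + j : ℤ) : ℝ))) = x * x ^ j := fun j => by
    rw [← exp_nat_mul, ← exp_add]; push_cast; ring_nf
  rw [Int.Icc_eq_finset_map, sum_map]
  simp only [Function.Embedding.trans_apply, Nat.castEmbedding_apply, addLeftEmbedding_apply,
    hterm, ← mul_sum]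
  calc x * ∑ j ∈ range _, x ^ j ≤ x * (x ^ 0 / (1 - x)) := by
        rw [range_eq_Ico]
        exact mul_le_mul_of_nonneg_left (geom_sum_Ico_le_of_lt_one hx0.le hx1) hx0.le
    _ = (exp t - 1)⁻¹ := by
        have : exp t - 1 ≠ 0 := by linarith [add_one_le_exp t]
        rw [show x = (exp t)⁻¹ from exp_neg t, pow_zero]
        field_simp
    _ ≤ t⁻¹ := inv_anti₀ ht (by linarith [add_one_le_exp t])

theorem card_boundedDistinctParts_le_exp {t : ℝ} (ht : 0 < t) (n : ℕ) :
    (#(boundedDistinctParts n) : ℝ) ≤ exp (t⁻¹ + t * n) := by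
  -- Rankin's trick: weight each set `S` by `exp (-t ∑ S) ≥ exp (-t n)`.
  have hrankin : #(boundedDistinctParts n) * exp (-(t * n)) ≤
      ∏ k ∈ Icc (1 : ℤ) n, (1 + exp (-(t * k))) :=
    calc #(boundedDistinctParts n) * exp (-(t * n))
        = ∑ _S ∈ boundedDistinctParts n, exp (-(t * n)) := by rw [sum_const, nsmul_eq_mul]
      _ ≤ ∑ S ∈ boundedDistinctParts n, exp (-(t * ↑(∑ k ∈ S, k))) := by
          refine sum_le_sum fun S hS => exp_le_exp.mpr ?_
          have : ((∑ k ∈ S, k : ℤ) : ℝ) ≤ n := by exact_mod_cast (mem_filter.mp hS).2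
          nlinarith
      _ ≤ ∑ S ∈ (Icc (1 : ℤ) n).powerset, exp (-(t * ↑(∑ k ∈ S, k))) :=
          sum_le_sum_of_subset_of_nonneg (filter_subset _ _) fun _ _ _ => (exp_pos _).le
      _ = ∏ k ∈ Icc (1 : ℤ) n, (1 + exp (-(t * k))) := by
          rw [prod_one_add]
          refine sum_congr rfl fun S _ => ?_
          rw [← exp_sum]
          push_cast
          rw [mul_sum, ← sum_neg_distrib]
  have hprod : ∏ k ∈ Icc (1 : ℤ) n, (1 + exp (-(t * k))) ≤ exp t⁻¹ :=
    calc ∏ k ∈ Icc (1 : ℤ) n, (1 + exp (-(t * k)))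
        ≤ ∏ k ∈ Icc (1 : ℤ) n, exp (exp (-(t * k))) :=
          prod_le_prod (fun _ _ => by positivity) fun k _ => by
            linarith [add_one_le_exp (exp (-(t * k)))]
      _ = exp (∑ k ∈ Icc (1 : ℤ) n, exp (-(t * k))) := (exp_sum _ _).symm
      _ ≤ exp t⁻¹ := exp_le_exp.mpr (sum_exp_neg_mul_Icc_le ht n)
  calc (#(boundedDistinctParts n) : ℝ)
      = #(boundedDistinctParts n) * exp (-(t * n)) * exp (t * n) := by
        rw [mul_assoc, ← exp_add, neg_add_cancel, exp_zero, mul_one]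
    _ ≤ exp t⁻¹ * exp (t * n) := by gcongr; exact hrankin.trans hprod
    _ = exp (t⁻¹ + t * n) := (exp_add _ _).symm

theorem card_boundedDistinctParts_le {n : ℕ} (hn : 1 ≤ n) :
    (#(boundedDistinctParts n) : ℝ) ≤ exp (2 * √n) := by
  have hs : 0 < √(n : ℝ) := sqrt_pos.mpr (by exact_mod_cast hn)
  convert card_boundedDistinctParts_le_exp (inv_pos.mpr hs) n using 2
  rw [inv_inv, inv_mul_eq_div, div_sqrt]
  ring

end DistinctParts

section Assembly

open Real

theorem cHSW_le (m : ℕ) : (cHSW m : ℝ) ≤ exp (2 * √m) * mu ^ m := by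
  rcases Nat.eq_zero_or_pos m with rfl | hm
  · simp [cHSW_zero]
  calc (cHSW m : ℝ) ≤ #(boundedDistinctParts m) * cSAB m := by
        exact_mod_cast cHSW_le_card_mul_cSAB hm
    _ ≤ exp (2 * √m) * mu ^ m :=
        mul_le_mul (card_boundedDistinctParts_le hm) (cSAB_le_mu_pow m) (Nat.cast_nonneg _)
          (exp_pos _).le

theorem add_one_le_exp_two_mul_sqrt {x : ℝ} (hx : 0 ≤ x) : x + 1 ≤ exp (2 * √x) :=
  calc x + 1 ≤ (1 + √x) ^ 2 := by nlinarith [sq_sqrt hx, sqrt_nonneg x]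
    _ ≤ exp (√x) ^ 2 := by gcongr; linarith [add_one_le_exp √x]
    _ = exp (2 * √x) := by rw [← exp_nat_mul]; norm_num

theorem cHSW_mul_cHSW_le {n i : ℕ} (hn : 1 ≤ n) (hi : i ≤ n) :
    (cHSW (i + 1) * cHSW (n - i) : ℝ) ≤ exp (6 * √n) * mu ^ (n + 1) := by
  have hfst : √((i + 1 : ℕ) : ℝ) ≤ 2 * √n := by
    rw [show (2 : ℝ) * √n = √(2 ^ 2 * n) by rw [sqrt_mul (by norm_num), sqrt_sq (by norm_num)]]
    exact sqrt_le_sqrt (by norm_cast; omega)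
  have hsnd : √((n - i : ℕ) : ℝ) ≤ √n := sqrt_le_sqrt (by exact_mod_cast Nat.sub_le n i)
  calc (cHSW (i + 1) * cHSW (n - i) : ℝ)
      ≤ (exp (2 * √((i + 1 : ℕ) : ℝ)) * mu ^ (i + 1)) *
          (exp (2 * √((n - i : ℕ) : ℝ)) * mu ^ (n - i)) :=
        mul_le_mul (cHSW_le _) (cHSW_le _) (Nat.cast_nonneg _) (by positivity [mu_nonneg])
    _ = exp (2 * √((i + 1 : ℕ) : ℝ) + 2 * √((n - i : ℕ) : ℝ)) * mu ^ (n + 1) := by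
        rw [exp_add, show n + 1 = (i + 1) + (n - i) by omega, pow_add]
        ring
    _ ≤ exp (6 * √n) * mu ^ (n + 1) := by
        gcongr
        · exact pow_nonneg mu_nonneg _
        · linarith

theorem cSAW_le_succ_mul_exp_mul_mu_pow {n : ℕ} (hn : 1 ≤ n) :
    (cSAW n : ℝ) ≤ (n + 1) * exp (6 * √n) * mu ^ (n + 1) :=
  calc (cSAW n : ℝ) ≤ ∑ i ∈ range (n + 1), (cHSW (i + 1) * cHSW (n - i) : ℝ) := by
        exact_mod_cast cSAW_le_sum_cHSW n
    _ ≤ ∑ _i ∈ range (n + 1), exp (6 * √n) * mu ^ (n + 1) :=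
        sum_le_sum fun i hi => cHSW_mul_cHSW_le hn (Nat.lt_succ_iff.mp (mem_range.mp hi))
    _ = (n + 1) * exp (6 * √n) * mu ^ (n + 1) := by simp [mul_assoc]

end Assembly

/-- The Hammersley–Welsh theorem on `ℤ²`:
`|SAW_n| ≤ exp(C n^{1/2}) μ^n` for all `n ∈ ℕ`. -/
theorem hammersley_welsh :
    ∃ C : ℝ, 0 < C ∧ ∀ n : ℕ, 1 ≤ n →
      (cSAW n : ℝ) ≤ Real.exp (C * Real.sqrt n) * mu ^ n := by
  refine ⟨8 + mu, by linarith [mu_nonneg], fun n hn => ?_⟩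
  have hsqrt : 1 ≤ √(n : ℝ) := Real.one_le_sqrt.mpr (by exact_mod_cast hn)
  have hmu : mu ≤ Real.exp (mu * √n) := by
    linarith [Real.add_one_le_exp mu,
      Real.exp_le_exp.mpr (le_mul_of_one_le_right mu_nonneg hsqrt)]
  have := mu_nonneg
  calc (cSAW n : ℝ) ≤ ((n + 1) * Real.exp (6 * √n) * mu) * mu ^ n := by
        rw [mul_assoc _ mu, ← pow_succ']; exact cSAW_le_succ_mul_exp_mul_mu_pow hn
    _ ≤ (Real.exp (2 * √n) * Real.exp (6 * √n) * Real.exp (mu * √n)) * mu ^ n := by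
        gcongr
        exact add_one_le_exp_two_mul_sqrt (Nat.cast_nonneg n)
    _ = Real.exp ((8 + mu) * √n) * mu ^ n := by
        rw [← Real.exp_add, ← Real.exp_add]
        ring_nf
end

section
/- Let ρ be a self-avoiding walk on ℤ² of length ℓ that attains its minimal height at ρ₀ and its maximal height at ρ_ℓ. For h ∈ ℕ, if (j₁,k₁) and (j₂,k₂) are two distinct right-detachable ρ-adjacencies, each of gap h (i.e. k₁ − j₁ = k₂ − j₂ = h), then |k₂ − k₁| ≥ h. -/
/-!
Flipping the plaquette of a right-detachable adjacency `(j, k)` deletes two steps `p < q` of `ρ`.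
Every other step keeps both ends on the same side of the split into the walk `ρ'` and the
polygon `Q`, and the endpoints `ρ 0`, `ρ ℓ` keep degree one, so they are not on `Q`; hence the
vertices of `ρ` on `Q` are exactly `ρ (p + 1), …, ρ q`. As `Q` slides to the right without meeting
`ρ'`, both deleted steps enter `Q` from the left, which forces `p = j - 1`, `q = k`, and puts
`ρ[j..k]` strictly to the right of the rest of `ρ` in every row.

If two such loops of gap `h` had `|k₂ - k₁| < h`, they would overlap, and `ρ[j₁, j₂)` and
`ρ(k₁, k₂]` would each lie to the right of the other in any common row. Their heights then form
disjoint integer intervals, which forces both chords onto the same two rows, where the same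
comparison of first coordinates is contradictory.
-/

/-- A nearest-neighbour step on `ℤ²`. -/
def IsStep (p q : ℤ × ℤ) : Prop := |q.1 - p.1| + |q.2 - p.2| = 1

/-- A self-avoiding walk of length `m` on `ℤ²` (with arbitrary starting point). -/
def IsSAWalk (m : ℕ) (γ : ℕ → ℤ × ℤ) : Prop :=
  (∀ i < m, IsStep (γ i) (γ (i + 1))) ∧ (∀ i ≤ m, ∀ j ≤ m, γ i = γ j → i = j)

/-- A self-avoiding polygon of length `m` on `ℤ²`, as a closed walk. -/
def IsSAPolygon (m : ℕ) (q : ℕ → ℤ × ℤ) : Prop :=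
  0 < m ∧ (∀ i < m, IsStep (q i) (q (i + 1))) ∧ q m = q 0 ∧
  (∀ i < m, ∀ j < m, q i = q j → i = j)

/-- The vertex set of a walk of length `m`. -/
def wVerts (m : ℕ) (γ : ℕ → ℤ × ℤ) : Set (ℤ × ℤ) := {p | ∃ i ≤ m, γ i = p}

/-- The edge set of a walk of length `m`. -/
def wEdges (m : ℕ) (γ : ℕ → ℤ × ℤ) : Set (Sym2 (ℤ × ℤ)) :=
  {e | ∃ i < m, e = s(γ i, γ (i + 1))}

/-- `(j, k)` is a right-detachable `ρ`-adjacency for a self-avoiding walk `ρ` of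
length `ℓ`: `{ρ j, ρ k}` is a vertically oriented unit edge; the horizontal edges of
the plaquette `P` having this edge as its right border belong to `ρ` while its
vertical edges do not; the modification `ρ Δ P` (removing `P`'s horizontal edges,
inserting its vertical ones) is a disjoint union of a walk `ρ'` and a polygon `Q`;
and every translate of `Q` directly to the right is disjoint from `ρ'`. -/
def RightDetachable (ℓ : ℕ) (ρ : ℕ → ℤ × ℤ) (j k : ℕ) : Prop :=
  j < k ∧ k ≤ ℓ ∧
  ∃ a : ℤ × ℤ,
    ({ρ j, ρ k} : Set (ℤ × ℤ)) = {a, a + (0, 1)} ∧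
    s(a + (-1, 0), a) ∈ wEdges ℓ ρ ∧
    s(a + (-1, 1), a + (0, 1)) ∈ wEdges ℓ ρ ∧
    s(a + (-1, 0), a + (-1, 1)) ∉ wEdges ℓ ρ ∧
    s(a, a + (0, 1)) ∉ wEdges ℓ ρ ∧
    ∃ (m : ℕ) (ρ' : ℕ → ℤ × ℤ) (m' : ℕ) (Q : ℕ → ℤ × ℤ),
      IsSAWalk m ρ' ∧ IsSAPolygon m' Q ∧
      Disjoint (wVerts m ρ') (wVerts m' Q) ∧
      (wEdges ℓ ρ \ {s(a + (-1, 0), a), s(a + (-1, 1), a + (0, 1))}) ∪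
          {s(a + (-1, 0), a + (-1, 1)), s(a, a + (0, 1))}
        = wEdges m ρ' ∪ wEdges m' Q ∧
      ∀ t : ℕ, Disjoint ((fun p : ℤ × ℤ => p + ((t : ℤ), 0)) '' wVerts m' Q)
        (wVerts m ρ')

section EdgeFlip

variable {α : Type*} {E : Set (Sym2 α)} {A B f g : Sym2 α}

theorem Set.Subsingleton.flip {x : α} (hx : {e ∈ E | x ∈ e}.Subsingleton) (hA : A ∈ E)
    (hB : B ∈ E) (hfg : ∀ y, y ∈ f ∨ y ∈ g → y ∈ A ∨ y ∈ B) (hdisj : ∀ y ∈ f, y ∉ g) :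
    {e ∈ (E \ {A, B}) ∪ {f, g} | x ∈ e}.Subsingleton := by
  rintro e ⟨he, hxe⟩ e' ⟨he', hxe'⟩
  by_cases hx' : x ∈ f ∨ x ∈ g
  · -- the only edge of `E` at `x` is `A` or `B`, so only `f` or `g` survives there
    have hgone : ∀ d ∈ E \ {A, B}, x ∉ d := by
      rintro d ⟨hdE, hdAB⟩ hxd
      rcases hfg x hx' with h | h
      exacts [hdAB (.inl (hx ⟨hdE, hxd⟩ ⟨hA, h⟩)), hdAB (.inr (hx ⟨hdE, hxd⟩ ⟨hB, h⟩))]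
    have hfg' : ∀ d ∈ (E \ {A, B}) ∪ {f, g}, x ∈ d → d = f ∧ x ∈ f ∨ d = g ∧ x ∈ g := by
      rintro d (hd | rfl | rfl) hxd
      exacts [absurd hxd (hgone d hd), .inl ⟨rfl, hxd⟩, .inr ⟨rfl, hxd⟩]
    rcases hfg' e he hxe with ⟨rfl, h⟩ | ⟨rfl, h⟩ <;>
      rcases hfg' e' he' hxe' with ⟨rfl, h'⟩ | ⟨rfl, h'⟩
    exacts [rfl, absurd h' (hdisj x h), absurd h (hdisj x h'), rfl]
  · have hE : ∀ d ∈ (E \ {A, B}) ∪ {f, g}, x ∈ d → d ∈ E := by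
      rintro d (hd | rfl | rfl) hxd
      exacts [hd.1, absurd (.inl hxd) hx', absurd (.inr hxd) hx']
    exact hx ⟨hE e he hxe, hxe⟩ ⟨hE e' he' hxe', hxe'⟩

theorem Set.ncard_flip (hE : E.Finite) (hA : A ∈ E) (hB : B ∈ E) (hAB : A ≠ B) (hf : f ∉ E)
    (hg : g ∉ E) (hfg : f ≠ g) : ((E \ {A, B}) ∪ {f, g}).ncard = E.ncard := by
  have hsub : ({A, B} : Set (Sym2 α)) ⊆ E := Set.insert_subset hA (Set.singleton_subset_iff.2 hB)
  have hdisj : Disjoint (E \ {A, B}) {f, g} := by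
    rw [Set.disjoint_right]
    rintro d (rfl | rfl) hd
    exacts [hf hd.1, hg hd.1]
  have h2 := Set.ncard_le_ncard hsub hE
  rw [Set.ncard_union_eq hdisj hE.sdiff, Set.ncard_sdiff hsub, Set.ncard_pair hAB,
    Set.ncard_pair hfg]
  rw [Set.ncard_pair hAB] at h2
  omega

end EdgeFlip

section Walks

variable {n : ℕ} {γ : ℕ → ℤ × ℤ}

theorem mem_wVerts_of_mem_wEdges {e : Sym2 (ℤ × ℤ)} {x : ℤ × ℤ} (he : e ∈ wEdges n γ)
    (hx : x ∈ e) : x ∈ wVerts n γ := by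
  obtain ⟨i, hi, rfl⟩ := he
  rcases Sym2.mem_iff.1 hx with rfl | rfl
  exacts [⟨i, hi.le, rfl⟩, ⟨i + 1, hi, rfl⟩]

theorem exists_mem_wEdges_of_mem_wVerts {x : ℤ × ℤ} (hn : 0 < n) (hx : x ∈ wVerts n γ) :
    ∃ e ∈ wEdges n γ, x ∈ e := by
  obtain ⟨i, hi, rfl⟩ := hx
  rcases hi.lt_or_eq with hi | rfl
  · exact ⟨_, ⟨i, hi, rfl⟩, Sym2.mem_mk_left _ _⟩
  · refine ⟨_, ⟨i - 1, by omega, rfl⟩, ?_⟩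
    rw [Nat.sub_add_cancel hn]
    exact Sym2.mem_mk_right _ _

theorem wVerts_finite : (wVerts n γ).Finite :=
  ((Set.finite_Iic n).image γ).subset (by rintro _ ⟨i, hi, rfl⟩; exact ⟨i, hi, rfl⟩)

theorem wEdges_finite : (wEdges n γ).Finite :=
  ((Set.finite_Iio n).image fun i => s(γ i, γ (i + 1))).subset
    (by rintro _ ⟨i, hi, rfl⟩; exact ⟨i, hi, rfl⟩)

theorem disjoint_wEdges_of_disjoint_wVerts {m : ℕ} {δ : ℕ → ℤ × ℤ}
    (h : Disjoint (wVerts n γ) (wVerts m δ)) : Disjoint (wEdges n γ) (wEdges m δ) := by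
  rw [Set.disjoint_left]
  rintro e he he'
  exact Set.disjoint_left.1 h (mem_wVerts_of_mem_wEdges he (Sym2.out_fst_mem e))
    (mem_wVerts_of_mem_wEdges he' (Sym2.out_fst_mem e))

theorem mem_wVerts_iff_of_mem_union {m : ℕ} {δ : ℕ → ℤ × ℤ}
    (h : Disjoint (wVerts n γ) (wVerts m δ)) {e : Sym2 (ℤ × ℤ)} {x y : ℤ × ℤ}
    (he : e ∈ wEdges n γ ∪ wEdges m δ) (hx : x ∈ e) (hy : y ∈ e) :
    x ∈ wVerts m δ ↔ y ∈ wVerts m δ := by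
  rcases he with he | he
  · exact iff_of_false (Set.disjoint_left.1 h (mem_wVerts_of_mem_wEdges he hx))
      (Set.disjoint_left.1 h (mem_wVerts_of_mem_wEdges he hy))
  · exact iff_of_true (mem_wVerts_of_mem_wEdges he hx) (mem_wVerts_of_mem_wEdges he hy)

end Walks

namespace IsSAWalk

variable {ℓ : ℕ} {ρ : ℕ → ℤ × ℤ}

theorem step_injective (hρ : IsSAWalk ℓ ρ) {i i' : ℕ} (hi : i < ℓ) (hi' : i' < ℓ)
    (h : s(ρ i, ρ (i + 1)) = s(ρ i', ρ (i' + 1))) : i = i' := by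
  rcases Sym2.eq_iff.1 h with ⟨h1, -⟩ | ⟨h1, h2⟩
  · exact hρ.2 i hi.le i' hi'.le h1
  · have := hρ.2 i hi.le (i' + 1) hi' h1
    have := hρ.2 (i + 1) hi i' hi'.le h2
    omega

theorem index_of_mem_step (hρ : IsSAWalk ℓ ρ) {i n : ℕ} (hi : i < ℓ) (hn : n ≤ ℓ)
    (h : ρ n ∈ s(ρ i, ρ (i + 1))) : n = i ∨ n = i + 1 := by
  rcases Sym2.mem_iff.1 h with h | h
  exacts [.inl (hρ.2 n hn i hi.le h), .inr (hρ.2 n hn (i + 1) hi h)]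

theorem subsingleton_incident (hρ : IsSAWalk ℓ ρ) {n : ℕ} (hn : n = 0 ∨ n = ℓ) :
    {e ∈ wEdges ℓ ρ | ρ n ∈ e}.Subsingleton := by
  rintro _ ⟨⟨i, hi, rfl⟩, h⟩ _ ⟨⟨i', hi', rfl⟩, h'⟩
  have := hρ.index_of_mem_step hi (by omega) h
  have := hρ.index_of_mem_step hi' (by omega) h'
  obtain rfl : i = i' := by omega
  rfl

theorem ncard_wVerts (hρ : IsSAWalk ℓ ρ) : (wVerts ℓ ρ).ncard = ℓ + 1 := by
  have : wVerts ℓ ρ = ρ '' Set.Iic ℓ := by ext; simp [wVerts, and_comm]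
  rw [this, Set.InjOn.ncard_image (s := Set.Iic ℓ) (fun i hi i' hi' => hρ.2 i hi i' hi'),
    ← Finset.coe_Iic, Set.ncard_coe_finset, Nat.card_Iic]

theorem ncard_wEdges (hρ : IsSAWalk ℓ ρ) : (wEdges ℓ ρ).ncard = ℓ := by
  have : wEdges ℓ ρ = (fun i => s(ρ i, ρ (i + 1))) '' Set.Iio ℓ := by
    ext; simp [wEdges, eq_comm]
  rw [this, Set.InjOn.ncard_image (s := Set.Iio ℓ) (fun i hi i' hi' => hρ.step_injective hi hi'),
    ← Finset.coe_Iio, Set.ncard_coe_finset, Nat.card_Iio]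

end IsSAWalk

namespace IsSAPolygon

variable {m : ℕ} {Q : ℕ → ℤ × ℤ}

theorem two_le (hQ : IsSAPolygon m Q) : 2 ≤ m := by
  obtain ⟨hm, hstep, hclose, -⟩ := hQ
  by_contra! h
  obtain rfl : m = 1 := by omega
  have := hstep 0 one_pos
  rw [zero_add, hclose] at this
  simp [IsStep] at this

theorem index_eq (hQ : IsSAPolygon m Q) {a b : ℕ} (ha : a ≤ m) (hb : b ≤ m) (h : Q a = Q b) :
    a = b ∨ a = 0 ∧ b = m ∨ a = m ∧ b = 0 := by
  obtain ⟨hm, -, hclose, hinj⟩ := hQ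
  have reduce : ∀ c ≤ m, ∃ c' < m, Q c' = Q c ∧ (c' = c ∨ c' = 0 ∧ c = m) := by
    intro c hc
    rcases hc.lt_or_eq with hc | rfl
    exacts [⟨c, hc, rfl, .inl rfl⟩, ⟨0, hm, hclose.symm, .inr ⟨rfl, rfl⟩⟩]
  obtain ⟨a', ha', hQa, ha''⟩ := reduce a ha
  obtain ⟨b', hb', hQb, hb''⟩ := reduce b hb
  have := hinj a' ha' b' hb' (by rw [hQa, hQb, h])
  omega

theorem step_injective (hQ : IsSAPolygon m Q) (h3 : 3 ≤ m) {a b : ℕ} (ha : a < m) (hb : b < m)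
    (h : s(Q a, Q (a + 1)) = s(Q b, Q (b + 1))) : a = b := by
  rcases Sym2.eq_iff.1 h with ⟨h1, -⟩ | ⟨h1, h2⟩
  · have := hQ.index_eq ha.le hb.le h1
    omega
  · have := hQ.index_eq ha.le hb h1
    have := hQ.index_eq ha hb.le h2
    omega

theorem not_subsingleton_incident (hQ : IsSAPolygon m Q) (h3 : 3 ≤ m) {x : ℤ × ℤ}
    (hx : x ∈ wVerts m Q) : ¬ {e ∈ wEdges m Q | x ∈ e}.Subsingleton := by
  intro hsub
  obtain ⟨i, hi1, him, rfl⟩ : ∃ i, 0 < i ∧ i ≤ m ∧ Q i = x := by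
    obtain ⟨i, hi, rfl⟩ := hx
    rcases Nat.eq_zero_or_pos i with rfl | hi0
    exacts [⟨m, by omega, le_rfl, hQ.2.2.1⟩, ⟨i, hi0, hi, rfl⟩]
  obtain ⟨n, hn, hQn, hne⟩ : ∃ n < m, Q n = Q i ∧ n ≠ i - 1 := by
    rcases him.lt_or_eq with him | rfl
    exacts [⟨i, him, rfl, by omega⟩, ⟨0, by omega, hQ.2.2.1.symm, by omega⟩]
  have hprev : s(Q (i - 1), Q (i - 1 + 1)) ∈ {e ∈ wEdges m Q | Q i ∈ e} := by
    refine ⟨⟨i - 1, by omega, rfl⟩, ?_⟩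
    rw [Nat.sub_add_cancel hi1]
    exact Sym2.mem_mk_right _ _
  have hnext : s(Q n, Q (n + 1)) ∈ {e ∈ wEdges m Q | Q i ∈ e} :=
    ⟨⟨n, hn, rfl⟩, hQn ▸ Sym2.mem_mk_left _ _⟩
  exact hne (hQ.step_injective h3 hn (by omega) (hsub hnext hprev))

theorem ncard_wEdges_two (hQ : IsSAPolygon 2 Q) : (wEdges 2 Q).ncard = 1 := by
  have hclose : Q (1 + 1) = Q 0 := hQ.2.2.1
  suffices wEdges 2 Q = {s(Q 0, Q 1)} by rw [this, Set.ncard_singleton]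
  ext e
  constructor
  · rintro ⟨i, hi, rfl⟩
    interval_cases i
    · rfl
    · rw [Set.mem_singleton_iff, hclose, Sym2.eq_swap]
  · rintro rfl
    exact ⟨0, two_pos, rfl⟩

theorem ncard_wVerts_two (hQ : IsSAPolygon 2 Q) : (wVerts 2 Q).ncard = 2 := by
  have hclose : Q 2 = Q 0 := hQ.2.2.1
  suffices wVerts 2 Q = {Q 0, Q 1} by
    rw [this, Set.ncard_pair fun h => by simpa using hQ.2.2.2 0 two_pos 1 one_lt_two h]
  ext x
  constructor
  · rintro ⟨i, hi, rfl⟩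
    interval_cases i <;> simp [hclose]
  · rintro (rfl | rfl)
    exacts [⟨0, by omega, rfl⟩, ⟨1, by omega, rfl⟩]

end IsSAPolygon

theorem Nat.iff_of_iff_succ {P : ℕ → Prop} {a b : ℕ} (hab : a ≤ b)
    (h : ∀ u, a ≤ u → u < b → (P u ↔ P (u + 1))) : P a ↔ P b := by
  induction b, hab using Nat.le_induction with
  | base => rfl
  | succ b hab ih => exact (ih fun u hu hub => h u hu (by omega)).trans (h b hab (by omega))

theorem lt_fst_of_disjoint_translates {S T : Set (ℤ × ℤ)}
    (h : ∀ t : ℕ, Disjoint ((fun p : ℤ × ℤ => p + ((t : ℤ), 0)) '' S) T) {x y : ℤ × ℤ}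
    (hx : x ∈ S) (hy : y ∈ T) (hxy : x.2 = y.2) : y.1 < x.1 := by
  by_contra! hle
  refine Set.disjoint_left.1 (h (y.1 - x.1).toNat) ⟨x, hx, ?_⟩ hy
  ext <;> simp [hxy]
  omega

/-- Replacing the edges `A ≠ B` of the self-avoiding walk `ρ` by new vertex-disjoint edges `f`, `g`
on the same four endpoints leaves the vertex-disjoint union of the self-avoiding walk `ρ'` and the
polygon `Q`. -/
structure SplitsOff (ℓ : ℕ) (ρ : ℕ → ℤ × ℤ) (A B f g : Sym2 (ℤ × ℤ)) (m : ℕ) (ρ' : ℕ → ℤ × ℤ)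
    (m' : ℕ) (Q : ℕ → ℤ × ℤ) : Prop where
  isSAWalk : IsSAWalk ℓ ρ
  A_mem : A ∈ wEdges ℓ ρ
  B_mem : B ∈ wEdges ℓ ρ
  A_ne_B : A ≠ B
  f_not_mem : f ∉ wEdges ℓ ρ
  g_not_mem : g ∉ wEdges ℓ ρ
  not_mem_g : ∀ x ∈ f, x ∉ g
  mem_iff : ∀ x, x ∈ f ∨ x ∈ g ↔ x ∈ A ∨ x ∈ B
  isSAWalk' : IsSAWalk m ρ'
  isSAPolygon : IsSAPolygon m' Q
  disjoint : Disjoint (wVerts m ρ') (wVerts m' Q)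
  edges_eq : (wEdges ℓ ρ \ {A, B}) ∪ {f, g} = wEdges m ρ' ∪ wEdges m' Q

namespace SplitsOff

variable {ℓ m m' : ℕ} {ρ ρ' Q : ℕ → ℤ × ℤ} {A B f g : Sym2 (ℤ × ℤ)}
  (S : SplitsOff ℓ ρ A B f g m ρ' m' Q)
include S

theorem exists_steps : ∃ p q, p < q ∧ q < ℓ ∧
    ({A, B} : Set (Sym2 (ℤ × ℤ))) = {s(ρ p, ρ (p + 1)), s(ρ q, ρ (q + 1))} := by
  obtain ⟨p, hp, rfl⟩ := S.A_mem
  obtain ⟨q, hq, rfl⟩ := S.B_mem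
  rcases lt_trichotomy p q with h | rfl | h
  exacts [⟨p, q, h, hq, rfl⟩, absurd rfl S.A_ne_B, ⟨q, p, h, hp, Set.pair_comm _ _⟩]

theorem mem_wVerts_of_mem {e : Sym2 (ℤ × ℤ)} {x : ℤ × ℤ} (he : e ∈ wEdges m ρ' ∪ wEdges m' Q)
    (hx : x ∈ e) : x ∈ wVerts ℓ ρ := by
  rw [← S.edges_eq] at he
  rcases he with ⟨he, -⟩ | he
  · exact mem_wVerts_of_mem_wEdges he hx
  · have : x ∈ A ∨ x ∈ B := (S.mem_iff x).1 (by rcases he with rfl | rfl; exacts [.inl hx, .inr hx])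
    rcases this with h | h
    exacts [mem_wVerts_of_mem_wEdges S.A_mem h, mem_wVerts_of_mem_wEdges S.B_mem h]

theorem mem_or_mem {x : ℤ × ℤ} (hx : x ∈ wVerts ℓ ρ) : x ∈ wVerts m ρ' ∨ x ∈ wVerts m' Q := by
  have hℓ : 0 < ℓ := by obtain ⟨i, hi, -⟩ := S.A_mem; omega
  obtain ⟨e, he, hxe⟩ := exists_mem_wEdges_of_mem_wVerts hℓ hx
  obtain ⟨d, hd, hxd⟩ : ∃ d ∈ wEdges m ρ' ∪ wEdges m' Q, x ∈ d := by
    rw [← S.edges_eq]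
    by_cases heAB : e ∈ ({A, B} : Set (Sym2 (ℤ × ℤ)))
    · rcases (S.mem_iff x).2 (by rcases heAB with rfl | rfl; exacts [.inl hxe, .inr hxe])
        with h | h
      exacts [⟨f, .inr (.inl rfl), h⟩, ⟨g, .inr (.inr rfl), h⟩]
    · exact ⟨e, .inl ⟨he, heAB⟩, hxe⟩
  rcases hd with hd | hd
  exacts [.inl (mem_wVerts_of_mem_wEdges hd hxd), .inr (mem_wVerts_of_mem_wEdges hd hxd)]

theorem three_le : 3 ≤ m' := by
  by_contra! h
  obtain rfl : m' = 2 := le_antisymm (by omega) S.isSAPolygon.two_le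
  have hfg : f ≠ g := fun h => S.not_mem_g _ (Sym2.out_fst_mem f) (h ▸ Sym2.out_fst_mem f)
  have hE := Set.ncard_flip wEdges_finite S.A_mem S.B_mem S.A_ne_B S.f_not_mem S.g_not_mem hfg
  rw [S.edges_eq, Set.ncard_union_eq (disjoint_wEdges_of_disjoint_wVerts S.disjoint)
    wEdges_finite wEdges_finite, S.isSAWalk'.ncard_wEdges, S.isSAPolygon.ncard_wEdges_two,
    S.isSAWalk.ncard_wEdges] at hE
  obtain ⟨p, q, hpq, hq, -⟩ := S.exists_steps
  -- `ρ'` has `ℓ - 1 ≥ 1` edges, so its `ℓ` vertices and the two of `Q` all lie on `ρ`: too many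
  have hsub : wVerts m ρ' ∪ wVerts 2 Q ⊆ wVerts ℓ ρ := by
    rintro x (hx | hx)
    · obtain ⟨e, he, hxe⟩ := exists_mem_wEdges_of_mem_wVerts (by omega) hx
      exact S.mem_wVerts_of_mem (.inl he) hxe
    · obtain ⟨e, he, hxe⟩ := exists_mem_wEdges_of_mem_wVerts two_pos hx
      exact S.mem_wVerts_of_mem (.inr he) hxe
  have hV := Set.ncard_le_ncard hsub wVerts_finite
  rw [Set.ncard_union_eq S.disjoint wVerts_finite wVerts_finite, S.isSAWalk'.ncard_wVerts,
    S.isSAPolygon.ncard_wVerts_two, S.isSAWalk.ncard_wVerts] at hV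
  omega

theorem not_mem_polygon {n : ℕ} (hn : n = 0 ∨ n = ℓ) : ρ n ∉ wVerts m' Q := by
  intro hQ
  apply S.isSAPolygon.not_subsingleton_incident S.three_le hQ
  have := (S.isSAWalk.subsingleton_incident hn).flip S.A_mem S.B_mem (fun y => (S.mem_iff y).1)
    S.not_mem_g
  rw [S.edges_eq] at this
  exact this.anti fun e ⟨he, hx⟩ => ⟨.inr he, hx⟩

theorem mem_polygon_iff_succ {u : ℕ} (hu : u < ℓ)
    (huAB : s(ρ u, ρ (u + 1)) ∉ ({A, B} : Set (Sym2 (ℤ × ℤ)))) :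
    ρ u ∈ wVerts m' Q ↔ ρ (u + 1) ∈ wVerts m' Q :=
  mem_wVerts_iff_of_mem_union S.disjoint (S.edges_eq ▸ .inl ⟨⟨u, hu, rfl⟩, huAB⟩)
    (Sym2.mem_mk_left _ _) (Sym2.mem_mk_right _ _)

theorem mem_polygon_iff {p q : ℕ} (hpq : p < q) (hq : q < ℓ)
    (hAB : ({A, B} : Set (Sym2 (ℤ × ℤ))) = {s(ρ p, ρ (p + 1)), s(ρ q, ρ (q + 1))}) {i : ℕ}
    (hi : i ≤ ℓ) : ρ i ∈ wVerts m' Q ↔ p < i ∧ i ≤ q := by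
  set P := fun i => ρ i ∈ wVerts m' Q
  have hconst : ∀ a b, a ≤ b → b ≤ ℓ → (∀ u, a ≤ u → u < b → u ≠ p ∧ u ≠ q) → (P a ↔ P b) := by
    refine fun a b hab hb h => Nat.iff_of_iff_succ hab fun u hau hub => ?_
    refine S.mem_polygon_iff_succ (by omega) ?_
    rw [hAB]
    rintro (he | he)
    exacts [(h u hau hub).1 (S.isSAWalk.step_injective (by omega) (hpq.trans hq) he),
      (h u hau hub).2 (S.isSAWalk.step_injective (by omega) hq he)]
  have hout : ∀ i ≤ ℓ, P i → p < i ∧ i ≤ q := by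
    intro i hi hPi
    by_contra hpqi
    rcases not_and_or.1 hpqi with hi' | hi'
    · exact S.not_mem_polygon (.inl rfl)
        ((hconst 0 i (by omega) hi fun u _ hu => ⟨by omega, by omega⟩).2 hPi)
    · exact S.not_mem_polygon (.inr rfl)
        ((hconst i ℓ (by omega) le_rfl fun u hu _ => ⟨by omega, by omega⟩).1 hPi)
  obtain ⟨t, ht, hPt⟩ : ∃ t ≤ ℓ, P t := by
    obtain ⟨t, ht, h⟩ :=
      S.mem_wVerts_of_mem (.inr ⟨0, S.isSAPolygon.1, rfl⟩) (Sym2.mem_mk_left _ _)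
    exact ⟨t, ht, ⟨0, Nat.zero_le _, h.symm⟩⟩
  refine ⟨hout i hi, fun ⟨hpi, hiq⟩ => ?_⟩
  obtain ⟨hpt, htq⟩ := hout t ht hPt
  rcases le_total i t with hit | hti
  · exact (hconst i t hit ht fun u _ _ => ⟨by omega, by omega⟩).2 hPt
  · exact (hconst t i hti hi fun u _ _ => ⟨by omega, by omega⟩).1 hPt

theorem fst_lt
    (htr : ∀ t : ℕ, Disjoint ((fun p : ℤ × ℤ => p + ((t : ℤ), 0)) '' wVerts m' Q) (wVerts m ρ'))
    {p q : ℕ} (hpq : p < q) (hq : q < ℓ)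
    (hAB : ({A, B} : Set (Sym2 (ℤ × ℤ))) = {s(ρ p, ρ (p + 1)), s(ρ q, ρ (q + 1))}) {u v : ℕ}
    (hu : p < u ∧ u ≤ q) (hv : v ≤ ℓ) (hv' : ¬ (p < v ∧ v ≤ q)) (hrow : (ρ v).2 = (ρ u).2) :
    (ρ v).1 < (ρ u).1 :=
  lt_fst_of_disjoint_translates htr ((S.mem_polygon_iff hpq hq hAB (by omega)).2 hu)
    ((S.mem_or_mem ⟨v, hv, rfl⟩).resolve_right (by rwa [S.mem_polygon_iff hpq hq hAB hv]))
    hrow.symm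

end SplitsOff

theorem mem_or_mem_iff_of_pair_eq_pair {α : Type*} {A B C D : Sym2 α}
    (h : ({A, B} : Set (Sym2 α)) = {C, D}) (x : α) : x ∈ A ∨ x ∈ B ↔ x ∈ C ∨ x ∈ D := by
  rcases Set.pair_eq_pair_iff.1 h with ⟨rfl, rfl⟩ | ⟨rfl, rfl⟩
  exacts [Iff.rfl, or_comm]

theorem mem_plaquette_edges {a x y : ℤ × ℤ}
    (h : s(x, y) ∈ ({s(a + (-1, 0), a), s(a + (-1, 1), a + (0, 1))} : Set (Sym2 (ℤ × ℤ)))) :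
    y.2 = x.2 ∧ (x.1 = a.1 - 1 ∨ x.1 = a.1) ∧ (y.1 = a.1 - 1 ∨ y.1 = a.1) := by
  rcases h with h | h <;> rcases Sym2.eq_iff.1 h with ⟨rfl, rfl⟩ | ⟨rfl, rfl⟩ <;>
    simp only [Prod.fst_add, Prod.snd_add, true_and, and_true, or_true] <;> omega

/-- The subwalk `ρ[j..k]`, closed up by the vertical unit edge `{ρ j, ρ k}`, is entered and left
within the rows of `ρ j` and `ρ k`, and in every row lies strictly to the right of the rest
of `ρ`. -/
structure RightLoop (ℓ : ℕ) (ρ : ℕ → ℤ × ℤ) (j k : ℕ) : Prop where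
  lt : j < k
  le_length : k ≤ ℓ
  fst_eq : (ρ k).1 = (ρ j).1
  snd_adj : (ρ k).2 = (ρ j).2 + 1 ∨ (ρ j).2 = (ρ k).2 + 1
  snd_pred : (ρ (j - 1)).2 = (ρ j).2
  snd_succ : (ρ (k + 1)).2 = (ρ k).2
  fst_lt : ∀ u v, j ≤ u → u ≤ k → v ≤ ℓ → (v < j ∨ k < v) → (ρ v).2 = (ρ u).2 →
    (ρ v).1 < (ρ u).1

theorem RightDetachable.rightLoop {ℓ j k : ℕ} {ρ : ℕ → ℤ × ℤ} (hρ : IsSAWalk ℓ ρ)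
    (hd : RightDetachable ℓ ρ j k) : RightLoop ℓ ρ j k := by
  obtain ⟨hjk, hkℓ, a, hset, hA, hB, hf, hg, m, ρ', m', Q, hρ', hQ, hdisj, hE, htr⟩ := hd
  have S : SplitsOff ℓ ρ s(a + (-1, 0), a) s(a + (-1, 1), a + (0, 1))
      s(a + (-1, 0), a + (-1, 1)) s(a, a + (0, 1)) m ρ' m' Q :=
    { isSAWalk := hρ, A_mem := hA, B_mem := hB, f_not_mem := hf, g_not_mem := hg,
      isSAWalk' := hρ', isSAPolygon := hQ, disjoint := hdisj, edges_eq := hE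
      A_ne_B := by simp [Prod.ext_iff]
      not_mem_g := fun x hx hx' => by
        simp only [Sym2.mem_iff, Prod.ext_iff, Prod.fst_add, Prod.snd_add] at hx hx'
        omega
      mem_iff := fun x => by simp only [Sym2.mem_iff]; tauto }
  obtain ⟨p, q, hpq, hq, hAB⟩ := S.exists_steps
  have hp := mem_plaquette_edges (x := ρ p) (y := ρ (p + 1)) (by rw [hAB]; exact .inl rfl)
  have hq' := mem_plaquette_edges (x := ρ q) (y := ρ (q + 1)) (by rw [hAB]; exact .inr rfl)
  have hpx := S.fst_lt htr hpq hq hAB (u := p + 1) (v := p) ⟨by omega, hpq⟩ (by omega)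
    (by omega) hp.1.symm
  have hqx := S.fst_lt htr hpq hq hAB (u := q) (v := q + 1) ⟨hpq, le_rfl⟩ hq (by omega) hq'.1
  have hidx : ∀ n ≤ ℓ, ρ n = a ∨ ρ n = a + (0, 1) → n = p ∨ n = p + 1 ∨ n = q ∨ n = q + 1 := by
    intro n hn hna
    rcases (mem_or_mem_iff_of_pair_eq_pair hAB (ρ n)).1
      (by rcases hna with h | h <;> simp [h]) with h | h
    · rcases hρ.index_of_mem_step (by omega) hn h with h | h <;> omega
    · rcases hρ.index_of_mem_step hq hn h with h | h <;> omega
  have hcorner : (ρ j = a ∧ ρ k = a + (0, 1)) ∨ (ρ j = a + (0, 1) ∧ ρ k = a) :=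
    Set.pair_eq_pair_iff.1 hset
  have hjx : (ρ j).1 = a.1 := by rcases hcorner with ⟨h, -⟩ | ⟨h, -⟩ <;> simp [h]
  have hkx : (ρ k).1 = a.1 := by rcases hcorner with ⟨-, h⟩ | ⟨-, h⟩ <;> simp [h]
  -- `ρ j`, `ρ k` are right corners of the plaquette; the deleted steps leave `ρ p`, `ρ (q + 1)` on
  -- its left side
  have hcol : ∀ n, n = p ∨ n = q + 1 → (ρ n).1 ≠ a.1 := by rintro n (rfl | rfl) <;> omega
  obtain ⟨rfl, rfl⟩ : j = p + 1 ∧ k = q := by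
    have := hidx j (by omega) (by tauto)
    have := hidx k hkℓ (by tauto)
    have := hcol j
    have := hcol k
    omega
  refine ⟨hjk, hkℓ, ?_, ?_, hp.1.symm, hq'.1, ?_⟩
  · rcases hcorner with ⟨h1, h2⟩ | ⟨h1, h2⟩ <;> simp [h1, h2]
  · rcases hcorner with ⟨h1, h2⟩ | ⟨h1, h2⟩ <;> simp [h1, h2]
  · exact fun u v hju huk hv hvu hrow =>
      S.fst_lt htr hpq hq hAB ⟨by omega, huk⟩ hv (by omega) hrow

theorem exists_eq_of_abs_sub_le_one {f : ℕ → ℤ} {a b : ℕ} (hab : a ≤ b)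
    (hf : ∀ i, a ≤ i → i < b → |f (i + 1) - f i| ≤ 1) {r : ℤ} (hr : r ∈ Set.uIcc (f a) (f b)) :
    ∃ t ∈ Set.Icc a b, f t = r := by
  induction b, hab using Nat.le_induction with
  | base => exact ⟨a, ⟨le_rfl, le_rfl⟩, by rw [Set.uIcc_self] at hr; exact hr.symm⟩
  | succ b hab ih =>
    by_cases hr' : r ∈ Set.uIcc (f a) (f b)
    · obtain ⟨t, ⟨h1, h2⟩, ht⟩ := ih (fun i hi hib => hf i hi (by omega)) hr'
      exact ⟨t, ⟨h1, by omega⟩, ht⟩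
    · refine ⟨b + 1, ⟨by omega, le_rfl⟩, ?_⟩
      have := abs_le.1 (hf b hab (by omega))
      simp only [Set.mem_uIcc] at hr hr'
      omega

theorem IsStep.abs_snd_sub_le_one {x y : ℤ × ℤ} (h : IsStep x y) : |y.2 - x.2| ≤ 1 := by
  have := abs_nonneg (y.1 - x.1)
  unfold IsStep at h
  linarith

theorem RightLoop.sub_le_sub {ℓ j₁ k₁ j₂ k₂ : ℕ} {ρ : ℕ → ℤ × ℤ}
    (hρ : ∀ i < ℓ, |(ρ (i + 1)).2 - (ρ i).2| ≤ 1) (h₁ : RightLoop ℓ ρ j₁ k₁)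
    (h₂ : RightLoop ℓ ρ j₂ k₂) (hk : k₁ < k₂) (hgap : k₁ - j₁ = k₂ - j₂) :
    k₁ - j₁ ≤ k₂ - k₁ := by
  by_contra! hlt
  have := h₁.lt
  have := h₂.lt
  have := h₂.le_length
  -- `ρ[j₁, j₂)` lies in the first loop only and `ρ(k₁, k₂]` in the second only
  have hrows : ∀ u v, j₁ ≤ u → u < j₂ → k₁ < v → v ≤ k₂ → (ρ v).2 ≠ (ρ u).2 := by
    intro u v hu hu' hv hv' h
    have := h₁.fst_lt u v hu (by omega) (by omega) (.inr hv) h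
    have := h₂.fst_lt v u (by omega) hv' (by omega) (.inl hu') h.symm
    omega
  have hsep : ∀ a b r, a ≤ b → b ≤ ℓ → (∀ t, a ≤ t → t ≤ b → (ρ t).2 ≠ r) →
      r ∉ Set.uIcc (ρ a).2 (ρ b).2 := by
    intro a b r hab hb h hr
    obtain ⟨t, ⟨h1, h2⟩, ht⟩ := exists_eq_of_abs_sub_le_one (f := fun i => (ρ i).2) hab
      (fun i _ hi => hρ i (by omega)) hr
    exact h t h1 h2 ht
  have c₁ := hsep (k₁ + 1) k₂ (ρ j₁).2 (by omega) (by omega)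
    fun t ht ht' => hrows j₁ t le_rfl (by omega) (by omega) ht'
  have c₂ := hsep (k₁ + 1) k₂ (ρ j₂).2 (by omega) (by omega) fun t ht ht' => by
    rw [← h₂.snd_pred]
    exact hrows (j₂ - 1) t (by omega) (by omega) (by omega) ht'
  have c₃ := hsep j₁ (j₂ - 1) (ρ k₁).2 (by omega) (by omega) fun t ht ht' => by
    rw [← h₁.snd_succ]
    exact (hrows t (k₁ + 1) ht (by omega) (by omega) (by omega)).symm
  have c₄ := hsep j₁ (j₂ - 1) (ρ k₂).2 (by omega) (by omega)
    fun t ht ht' => (hrows t k₂ ht (by omega) hk le_rfl).symm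
  rw [h₁.snd_succ, Set.mem_uIcc] at c₁ c₂
  rw [h₂.snd_pred, Set.mem_uIcc] at c₃ c₄
  -- the four corner heights leave only one configuration: both chords span the same two rows
  have hrow : (ρ k₂).2 = (ρ k₁).2 ∧ (ρ j₁).2 = (ρ j₂).2 := by
    rcases h₁.snd_adj with h | h <;> rcases h₂.snd_adj with h' | h' <;> omega
  have := h₁.fst_lt k₁ k₂ (by omega) le_rfl h₂.le_length (.inr hk) hrow.1
  have := h₂.fst_lt j₂ j₁ le_rfl (by omega) (by omega) (.inl (by omega)) hrow.2
  have := h₁.fst_eq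
  have := h₂.fst_eq
  omega

theorem right_detachable_adjacencies_far_apart_general (ℓ h : ℕ) (ρ : ℕ → ℤ × ℤ)
    (hρ : IsSAWalk ℓ ρ)
    (j₁ k₁ j₂ k₂ : ℕ)
    (h₁ : RightDetachable ℓ ρ j₁ k₁) (h₂ : RightDetachable ℓ ρ j₂ k₂)
    (hg₁ : k₁ - j₁ = h) (hg₂ : k₂ - j₂ = h)
    (hne : (j₁, k₁) ≠ (j₂, k₂)) :
    (h : ℤ) ≤ |(k₂ : ℤ) - (k₁ : ℤ)| := by
  have hy : ∀ i < ℓ, |(ρ (i + 1)).2 - (ρ i).2| ≤ 1 := fun i hi => (hρ.1 i hi).abs_snd_sub_le_one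
  have L₁ := h₁.rightLoop hρ
  have L₂ := h₂.rightLoop hρ
  have := L₁.lt
  have := L₂.lt
  rcases lt_trichotomy k₁ k₂ with hk | rfl | hk
  · have := L₁.sub_le_sub hy L₂ hk (by omega)
    rw [abs_of_pos (by omega)]
    omega
  · exact absurd (by rw [Prod.mk.injEq]; omega) hne
  · have := L₂.sub_le_sub hy L₁ hk (by omega)
    rw [abs_of_neg (by omega)]
    omega

/-- Two distinct right-detachable `ρ`-adjacencies of the same gap `h`, for a
self-avoiding walk attaining its minimal height at `ρ 0` and its maximal height at
`ρ ℓ`, have their upper indices at distance at least `h`. -/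
theorem right_detachable_adjacencies_far_apart (ℓ h : ℕ) (ρ : ℕ → ℤ × ℤ)
    (hρ : IsSAWalk ℓ ρ)
    (hmin : ∀ i ≤ ℓ, (ρ 0).2 ≤ (ρ i).2) (hmax : ∀ i ≤ ℓ, (ρ i).2 ≤ (ρ ℓ).2)
    (hh : 0 < h) (j₁ k₁ j₂ k₂ : ℕ)
    (h₁ : RightDetachable ℓ ρ j₁ k₁) (h₂ : RightDetachable ℓ ρ j₂ k₂)
    (hg₁ : k₁ - j₁ = h) (hg₂ : k₂ - j₂ = h)
    (hne : (j₁, k₁) ≠ (j₂, k₂)) :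
    (h : ℤ) ≤ |(k₂ : ℤ) - (k₁ : ℤ)| :=
  right_detachable_adjacencies_far_apart_general ℓ h ρ hρ j₁ k₁ j₂ k₂ h₁ h₂ hg₁ hg₂ hne
end
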